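/- arXiv:1906.10801 — 11 statements merged into one kernel-verified Lean document; each statement's English description precedes it below -/
import Mathlib

section
/- For any mixed dominating set D = (V_D, E_D) of a graph G, it holds that 2(|V_D| + |E_D|) ≥ |V_D| + 2|E_D| ≥ τ(G), where τ(G) is the minimum size of a vertex cover of G. -/
/-- Mixed dominating set, see paper. -/
def IsMixedDomSet {V : Type*} (G : SimpleGraph V) (VD : Finset V) (ED : Finset (Sym2 V)) :
    Prop :=
  (∀ e ∈ ED, e ∈ G.edgeSet) ∧
  (∀ v : V, v ∉ VD → (∃ e ∈ ED, v ∈ e) ∨ ∃ u ∈ VD, G.Adj v u) ∧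
  (∀ e ∈ G.edgeSet, e ∉ ED → ∃ v ∈ e, v ∈ VD ∨ ∃ f ∈ ED, v ∈ f)

/-- A vertex cover contains at least one endpoint of every edge. -/
def IsVertexCover {V : Type*} (G : SimpleGraph V) (C : Finset V) : Prop :=
  ∀ ⦃u w : V⦄, G.Adj u w → u ∈ C ∨ w ∈ C

/-- For any mixed dominating set `D = (VD, ED)` of `G`:
`2(|VD| + |ED|) ≥ |VD| + 2|ED| ≥ τ(G)`, where `τ` is the minimum size of a vertex cover. -/
theorem two_card_mixedDomSet_ge_vertexCoverNumber {V : Type*} (G : SimpleGraph V)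
    (VD : Finset V) (ED : Finset (Sym2 V)) (hD : IsMixedDomSet G VD ED)
    (τ : ℕ) (hτ : ∃ C : Finset V, IsVertexCover G C ∧ C.card = τ)
    (hτmin : ∀ C : Finset V, IsVertexCover G C → τ ≤ C.card) :
    τ ≤ VD.card + 2 * ED.card ∧ VD.card + 2 * ED.card ≤ 2 * (VD.card + ED.card) := by
  classical
  obtain ⟨hE, hdom, hcov⟩ := hD
  -- endpoints of an edge as a Finset
  set ends : Sym2 V → Finset V := fun e => {(Quot.out e).1, (Quot.out e).2} with hends
  have hmem_ends : ∀ (e : Sym2 V) (v : V), v ∈ e ↔ v ∈ ends e := by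
    intro e v
    obtain ⟨a, b, hab⟩ : ∃ a b, Quot.out e = (a, b) := ⟨_, _, rfl⟩
    conv_lhs => rw [← e.out_eq, hab]
    rw [show Quot.mk (Sym2.Rel V) (a, b) = s(a, b) from rfl, Sym2.mem_iff]
    simp [ends, hab]
  set C : Finset V := VD ∪ ED.biUnion ends with hC
  have hVC : IsVertexCover G C := by
    intro u w huw
    by_cases he : s(u, w) ∈ ED
    · left
      simp only [hC, Finset.mem_union, Finset.mem_biUnion]
      exact Or.inr ⟨_, he, (hmem_ends _ u).1 (by simp)⟩
    · obtain ⟨v, hv, hv2⟩ := hcov s(u, w) (G.mem_edgeSet.2 huw) he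
      have hvC : v ∈ C := by
        simp only [hC, Finset.mem_union, Finset.mem_biUnion]
        rcases hv2 with h | ⟨f, hf, hvf⟩
        · exact Or.inl h
        · exact Or.inr ⟨f, hf, (hmem_ends _ _).1 hvf⟩
      rcases Sym2.mem_iff.1 hv with rfl | rfl
      · exact Or.inl hvC
      · exact Or.inr hvC
  constructor
  · refine le_trans (hτmin C hVC) ?_
    calc C.card ≤ VD.card + (ED.biUnion ends).card := Finset.card_union_le _ _
      _ ≤ VD.card + ∑ e ∈ ED, (ends e).card := by
          exact Nat.add_le_add_left (Finset.card_biUnion_le) _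
      _ ≤ VD.card + ∑ _e ∈ ED, 2 := by
          refine Nat.add_le_add_left (Finset.sum_le_sum fun e _ => ?_) _
          exact le_trans (Finset.card_insert_le _ _) (by simp)
      _ = VD.card + 2 * ED.card := by rw [Finset.sum_const, smul_eq_mul, Nat.mul_comm]
  · omega
end

section
/- Let G be a graph without isolated vertices and let 0 ≤ w_v ≤ w_e be weights. Then for every mixed dominating set D of G and every vertex cover C of G: (a) the minimum weight of a mixed dominating set of G is at most w_v·|C|, and (b) w_v·τ(G) ≤ 2·w(D), where τ(G) is the minimum size of a vertex cover of G. -/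
open Finset

section

variable {V : Type*} {G : SimpleGraph V}

theorem IsVertexCover.isMixedDomSet {C : Finset V} (hiso : ∀ v : V, ∃ u : V, G.Adj v u)
    (hC : IsVertexCover G C) : IsMixedDomSet G C ∅ := by
  refine ⟨by simp, fun v hv => ?_, fun e he _ => ?_⟩
  · obtain ⟨u, hvu⟩ := hiso v
    exact Or.inr ⟨u, (hC hvu).resolve_left hv, hvu⟩
  · induction e using Sym2.ind with
    | _ a b =>
      rcases hC (G.mem_edgeSet.mp he) with ha | hb
      · exact ⟨a, Sym2.mem_mk_left a b, Or.inl ha⟩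
      · exact ⟨b, Sym2.mem_mk_right a b, Or.inl hb⟩

theorem IsMixedDomSet.isVertexCover_union_biUnion [DecidableEq V] {VD : Finset V}
    {ED : Finset (Sym2 V)} (hD : IsMixedDomSet G VD ED) :
    IsVertexCover G (VD ∪ ED.biUnion Sym2.toFinset) := by
  have mem_of_mem_edge {v : V} {f : Sym2 V} (hf : f ∈ ED) (hvf : v ∈ f) :
      v ∈ VD ∪ ED.biUnion Sym2.toFinset :=
    mem_union_right _ (mem_biUnion.mpr ⟨f, hf, Sym2.mem_toFinset.mpr hvf⟩)
  intro u w huw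
  by_cases he : s(u, w) ∈ ED
  · exact Or.inl (mem_of_mem_edge he (Sym2.mem_mk_left u w))
  · obtain ⟨v, hv, hvD⟩ := hD.2.2 _ (G.mem_edgeSet.mpr huw) he
    have hvC : v ∈ VD ∪ ED.biUnion Sym2.toFinset := by
      rcases hvD with hvV | ⟨f, hf, hvf⟩
      · exact mem_union_left _ hvV
      · exact mem_of_mem_edge hf hvf
    rcases Sym2.mem_iff.mp hv with rfl | rfl
    · exact Or.inl hvC
    · exact Or.inr hvC

theorem Sym2.card_toFinset_le_two [DecidableEq V] (e : Sym2 V) : #e.toFinset ≤ 2 := by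
  rw [Sym2.card_toFinset]
  split_ifs <;> omega

theorem card_union_biUnion_toFinset_le [DecidableEq V] (VD : Finset V) (ED : Finset (Sym2 V)) :
    #(VD ∪ ED.biUnion Sym2.toFinset) ≤ #VD + 2 * #ED :=
  calc #(VD ∪ ED.biUnion Sym2.toFinset)
      _ ≤ #VD + #(ED.biUnion Sym2.toFinset) := card_union_le _ _
      _ ≤ #VD + #ED * 2 := by
        gcongr
        exact card_biUnion_le_card_mul _ _ _ fun e _ => e.card_toFinset_le_two
      _ = #VD + 2 * #ED := by rw [mul_comm]

end

theorem weight_bounds_of_vertexCover_and_mixedDomSet_general {V : Type*} (G : SimpleGraph V)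
    (hiso : ∀ v : V, ∃ u : V, G.Adj v u)
    (wv we : ℝ) (hwv : 0 ≤ wv) (hwe : wv ≤ we)
    (VD : Finset V) (ED : Finset (Sym2 V)) (hD : IsMixedDomSet G VD ED)
    (C : Finset V) (hC : IsVertexCover G C)
    (τ : ℕ)
    (hτmin : ∀ C₀ : Finset V, IsVertexCover G C₀ → τ ≤ C₀.card) :
    (∃ (VD' : Finset V) (ED' : Finset (Sym2 V)), IsMixedDomSet G VD' ED' ∧
      wv * VD'.card + we * ED'.card ≤ wv * C.card) ∧
    wv * τ ≤ 2 * (wv * VD.card + we * ED.card) := by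
  classical
  refine ⟨⟨C, ∅, hC.isMixedDomSet hiso, by simp⟩, ?_⟩
  have hτ_le : (τ : ℝ) ≤ #VD + 2 * #ED := by
    exact_mod_cast (hτmin _ hD.isVertexCover_union_biUnion).trans
      (card_union_biUnion_toFinset_le VD ED)
  have hwED : wv * #ED ≤ we * #ED := by gcongr
  calc wv * τ ≤ wv * (#VD + 2 * #ED) := by gcongr
    _ ≤ 2 * (wv * #VD + we * #ED) := by linarith [mul_nonneg hwv (#VD).cast_nonneg]

/-- Let `G` have no isolated vertices and `0 ≤ w_v ≤ w_e`. For every mixed dominating set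
`D = (VD, ED)` and every vertex cover `C`: (a) the minimum weight of a mixed dominating set
is at most `w_v * |C|` (witnessed by some mixed dominating set of weight at most `w_v * |C|`),
and (b) `w_v * τ(G) ≤ 2 * w(D)`. -/
theorem weight_bounds_of_vertexCover_and_mixedDomSet {V : Type*} (G : SimpleGraph V)
    (hiso : ∀ v : V, ∃ u : V, G.Adj v u)
    (wv we : ℝ) (hwv : 0 ≤ wv) (hwe : wv ≤ we)
    (VD : Finset V) (ED : Finset (Sym2 V)) (hD : IsMixedDomSet G VD ED)
    (C : Finset V) (hC : IsVertexCover G C)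
    (τ : ℕ) (hτ : ∃ C₀ : Finset V, IsVertexCover G C₀ ∧ C₀.card = τ)
    (hτmin : ∀ C₀ : Finset V, IsVertexCover G C₀ → τ ≤ C₀.card) :
    (∃ (VD' : Finset V) (ED' : Finset (Sym2 V)), IsMixedDomSet G VD' ED' ∧
      wv * VD'.card + we * ED'.card ≤ wv * C.card) ∧
    wv * τ ≤ 2 * (wv * VD.card + we * ED.card) :=
  weight_bounds_of_vertexCover_and_mixedDomSet_general G hiso wv we hwv hwe VD ED hD C hC τ hτmin
end

section
/- Let G be a graph without isolated vertices and let 0 ≤ w_v ≤ w_e be weights. If S_wmd is a minimum-weight mixed dominating set of G, then w(S_wmd) ≤ w_v·τ(G) ≤ 2·w(S_wmd), where τ(G) is the minimum size of a vertex cover of G. -/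
open Finset

section

variable {V : Type*}

def mixedSupport [DecidableEq V] (VD : Finset V) (ED : Finset (Sym2 V)) : Finset V :=
  VD ∪ ED.biUnion Sym2.toFinset

variable {G : SimpleGraph V}

theorem card_mixedSupport_le [DecidableEq V] (VD : Finset V) (ED : Finset (Sym2 V)) :
    #(mixedSupport VD ED) ≤ #VD + 2 * #ED := by
  have hedge : ∀ e ∈ ED, #e.toFinset ≤ 2 := fun e _ => by
    rw [Sym2.card_toFinset]; split_ifs <;> omega
  calc #(mixedSupport VD ED) ≤ #VD + #(ED.biUnion Sym2.toFinset) := card_union_le _ _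
    _ ≤ #VD + ∑ e ∈ ED, #e.toFinset := Nat.add_le_add_left card_biUnion_le _
    _ ≤ #VD + 2 * #ED := by
      grw [sum_le_card_nsmul ED _ 2 hedge, smul_eq_mul, mul_comm]

theorem IsMixedDomSet.isVertexCover_mixedSupport [DecidableEq V] {VD : Finset V}
    {ED : Finset (Sym2 V)} (hD : IsMixedDomSet G VD ED) :
    IsVertexCover G (mixedSupport VD ED) := by
  have hmem : ∀ v, (v ∈ VD ∨ ∃ f ∈ ED, v ∈ f) → v ∈ mixedSupport VD ED := by
    simp [mixedSupport, Sym2.mem_toFinset]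
  intro u w huw
  by_cases hE : s(u, w) ∈ ED
  · exact .inl (hmem u (.inr ⟨_, hE, Sym2.mem_mk_left u w⟩))
  · obtain ⟨v, hv, hvD⟩ := hD.2.2 s(u, w) huw hE
    rcases Sym2.mem_iff.1 hv with rfl | rfl
    exacts [.inl (hmem _ hvD), .inr (hmem _ hvD)]

theorem IsVertexCover.isMixedDomSet_empty (hiso : ∀ v : V, ∃ u : V, G.Adj v u) {C : Finset V}
    (hC : IsVertexCover G C) : IsMixedDomSet G C ∅ := by
  refine ⟨by simp, fun v hv => ?_, fun e he _ => ?_⟩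
  · obtain ⟨u, hvu⟩ := hiso v
    exact .inr ⟨u, (hC hvu).resolve_left hv, hvu⟩
  · induction e using Sym2.ind with
    | _ a b =>
      rcases hC (he : G.Adj a b) with h | h
      exacts [⟨a, Sym2.mem_mk_left a b, .inl h⟩, ⟨b, Sym2.mem_mk_right a b, .inl h⟩]

end

/-- Let `G` have no isolated vertices and `0 ≤ w_v ≤ w_e`. If `S_wmd = (SVD, SED)` is a
minimum-weight mixed dominating set, then `w(S_wmd) ≤ w_v * τ(G) ≤ 2 * w(S_wmd)`. -/
theorem minWeight_mixedDomSet_between_tau {V : Type*} (G : SimpleGraph V)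
    (hiso : ∀ v : V, ∃ u : V, G.Adj v u)
    (wv we : ℝ) (hwv : 0 ≤ wv) (hwe : wv ≤ we)
    (SVD : Finset V) (SED : Finset (Sym2 V)) (hS : IsMixedDomSet G SVD SED)
    (hSmin : ∀ (VD : Finset V) (ED : Finset (Sym2 V)), IsMixedDomSet G VD ED →
      wv * SVD.card + we * SED.card ≤ wv * VD.card + we * ED.card)
    (τ : ℕ) (hτ : ∃ C₀ : Finset V, IsVertexCover G C₀ ∧ C₀.card = τ)
    (hτmin : ∀ C₀ : Finset V, IsVertexCover G C₀ → τ ≤ C₀.card) :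
    wv * SVD.card + we * SED.card ≤ wv * τ ∧
    wv * τ ≤ 2 * (wv * SVD.card + we * SED.card) := by
  classical
  obtain ⟨C₀, hC₀, rfl⟩ := hτ
  refine ⟨by simpa using hSmin C₀ ∅ (hC₀.isMixedDomSet_empty hiso), ?_⟩
  have hτC : (#C₀ : ℝ) ≤ #SVD + 2 * #SED := by
    exact_mod_cast (hτmin _ hS.isVertexCover_mixedSupport).trans (card_mixedSupport_le SVD SED)
  calc wv * #C₀ ≤ wv * (#SVD + 2 * #SED) := mul_le_mul_of_nonneg_left hτC hwv
    _ ≤ 2 * (wv * #SVD + we * #SED) := by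
      linarith [mul_nonneg hwv (Nat.cast_nonneg (α := ℝ) #SVD),
        mul_le_mul_of_nonneg_right hwe (Nat.cast_nonneg (α := ℝ) #SED)]
end

section
/- Let G be a graph, let I be the set of isolated vertices of G, let 0 ≤ w_v ≤ w_e be weights, let α ≥ 1, and let C be a vertex cover of G with |C| ≤ α·τ(G). Then the mixed set (C ∪ I, ∅) is a mixed dominating set of G whose weight satisfies w_v·|C ∪ I| ≤ 2α·w(S_wmd), where S_wmd is a minimum-weight mixed dominating set of G. -/
/-- endpoints of a Sym2 as a Finset -/
private def sym2EP {V : Type*} [DecidableEq V] : Sym2 V → Finset V :=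
  Sym2.lift ⟨fun a b => {a, b}, fun a b => Finset.pair_comm a b⟩

private lemma mem_sym2EP {V : Type*} [DecidableEq V] {v : V} {e : Sym2 V} :
    v ∈ sym2EP e ↔ v ∈ e := by
  induction e with
  | _ a b => simp [sym2EP, Sym2.mem_iff]

private lemma card_sym2EP {V : Type*} [DecidableEq V] (e : Sym2 V) : (sym2EP e).card ≤ 2 := by
  induction e with
  | _ a b =>
    show ({a, b} : Finset V).card ≤ 2
    exact (Finset.card_insert_le _ _).trans (by simp)

/-- Let `I` be the set of isolated vertices of `G`, let `0 ≤ w_v ≤ w_e`, `α ≥ 1`, and let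
`C` be a vertex cover with `|C| ≤ α * τ(G)`. Then `(C ∪ I, ∅)` is a mixed dominating set of
weight `w_v * |C ∪ I| ≤ 2α * w(S_wmd)`, where `S_wmd` is a minimum-weight mixed dominating
set of `G`. -/
theorem approx_vertexCover_gives_two_alpha_approx {V : Type*} [DecidableEq V]
    (G : SimpleGraph V)
    (I : Finset V) (hI : ∀ v : V, v ∈ I ↔ ∀ u : V, ¬ G.Adj v u)
    (wv we : ℝ) (hwv : 0 ≤ wv) (hwe : wv ≤ we)
    (α : ℝ) (hα : 1 ≤ α)
    (τ : ℕ) (hτ : ∃ C₀ : Finset V, IsVertexCover G C₀ ∧ C₀.card = τ)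
    (hτmin : ∀ C₀ : Finset V, IsVertexCover G C₀ → τ ≤ C₀.card)
    (C : Finset V) (hC : IsVertexCover G C) (hCapx : (C.card : ℝ) ≤ α * τ)
    (SVD : Finset V) (SED : Finset (Sym2 V)) (hS : IsMixedDomSet G SVD SED)
    (hSmin : ∀ (VD : Finset V) (ED : Finset (Sym2 V)), IsMixedDomSet G VD ED →
      wv * SVD.card + we * SED.card ≤ wv * VD.card + we * ED.card) :
    IsMixedDomSet G (C ∪ I) ∅ ∧
    wv * ((C ∪ I).card : ℝ) ≤ 2 * α * (wv * SVD.card + we * SED.card) := by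
  
  classical
  obtain ⟨hS1, hS2, hS3⟩ := hS
  -- isolated vertices are in SVD
  have hIS : I ⊆ SVD := by
    intro v hv
    by_contra hvS
    rcases hS2 v hvS with ⟨e, he, hve⟩ | ⟨u, _, hadj⟩
    · obtain ⟨u, rfl⟩ := Sym2.mem_iff_exists.1 hve
      exact (hI v).1 hv u (hS1 _ he)
    · exact (hI v).1 hv u hadj
  -- a vertex cover from the mixed dominating set
  have hC'vc : IsVertexCover G (SVD ∪ SED.biUnion sym2EP) := by
    intro u w h
    by_cases hmem : s(u, w) ∈ SED
    · exact Or.inl (Finset.mem_union_right _ (Finset.mem_biUnion.2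
        ⟨_, hmem, mem_sym2EP.2 (by simp)⟩))
    · obtain ⟨v, hv, hv2⟩ := hS3 _ h hmem
      have hvC : v ∈ SVD ∪ SED.biUnion sym2EP := by
        rcases hv2 with h' | ⟨f, hf, hvf⟩
        · exact Finset.mem_union_left _ h'
        · exact Finset.mem_union_right _ (Finset.mem_biUnion.2 ⟨f, hf, mem_sym2EP.2 hvf⟩)
      rcases Sym2.mem_iff.1 hv with rfl | rfl
      · exact Or.inl hvC
      · exact Or.inr hvC
  have hcard : (SVD ∪ SED.biUnion sym2EP).card ≤ SVD.card + 2 * SED.card := by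
    calc (SVD ∪ SED.biUnion sym2EP).card ≤ SVD.card + (SED.biUnion sym2EP).card :=
          Finset.card_union_le _ _
      _ ≤ SVD.card + ∑ e ∈ SED, (sym2EP e).card :=
          Nat.add_le_add_left (Finset.card_biUnion_le) _
      _ ≤ SVD.card + ∑ _e ∈ SED, 2 :=
          Nat.add_le_add_left (Finset.sum_le_sum fun e _ => card_sym2EP e) _
      _ = SVD.card + 2 * SED.card := by rw [Finset.sum_const, smul_eq_mul, mul_comm]
  have hτle : τ ≤ SVD.card + 2 * SED.card := (hτmin _ hC'vc).trans hcard
  constructor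
  · refine ⟨fun e he => absurd he (Finset.notMem_empty e), fun v hv => ?_,
      fun e he _ => ?_⟩
    · have hvC : v ∉ C := fun h => hv (Finset.mem_union_left _ h)
      have hvI : v ∉ I := fun h => hv (Finset.mem_union_right _ h)
      obtain ⟨u, hadj⟩ := not_forall.1 ((hI v).not.1 hvI)
      push_neg at hadj
      rcases hC hadj with h' | h'
      · exact absurd h' hvC
      · exact Or.inr ⟨u, Finset.mem_union_left _ h', hadj⟩
    · induction e with
      | _ u w =>
        have hadj : G.Adj u w := he
        rcases hC hadj with h' | h'
        · exact ⟨u, Sym2.mem_mk_left _ _, Or.inl (Finset.mem_union_left _ h')⟩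
        · exact ⟨w, Sym2.mem_mk_right _ _, Or.inl (Finset.mem_union_left _ h')⟩
  · have h1 : ((C ∪ I).card : ℝ) ≤ (C.card : ℝ) + (I.card : ℝ) := by
      exact_mod_cast Finset.card_union_le C I
    have h2 : (I.card : ℝ) ≤ (SVD.card : ℝ) := by exact_mod_cast Finset.card_le_card hIS
    have h3 : (τ : ℝ) ≤ (SVD.card : ℝ) + 2 * (SED.card : ℝ) := by exact_mod_cast hτle
    have h4 : (0:ℝ) ≤ (SVD.card : ℝ) := Nat.cast_nonneg _
    have h5 : (0:ℝ) ≤ (SED.card : ℝ) := Nat.cast_nonneg _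
    have h6 : (0:ℝ) ≤ (τ : ℝ) := Nat.cast_nonneg _
    nlinarith [mul_le_mul_of_nonneg_left hCapx hwv, mul_le_mul_of_nonneg_left h2 hwv,
      mul_le_mul_of_nonneg_left h3 (mul_nonneg (by linarith : (0:ℝ) ≤ α) hwv),
      mul_le_mul_of_nonneg_left (mul_le_mul_of_nonneg_right hwe h5)
        (by linarith : (0:ℝ) ≤ 2 * α),
      mul_nonneg (mul_nonneg (by linarith : (0:ℝ) ≤ α - 1) hwv) h4,
      mul_le_mul_of_nonneg_left h1 hwv]
end

section
/- Let G be a graph without isolated vertices, let weights satisfy 0 ≤ 2·w_v ≤ w_e, let α ≥ 1, and let C be a vertex cover of G with |C| ≤ α·τ(G). Then the mixed set (C, ∅) is a mixed dominating set of G with w_v·|C| ≤ α·w(S_wmd), where S_wmd is a minimum-weight mixed dominating set of G. -/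
/-- Let `G` have no isolated vertices, `0 ≤ 2 w_v ≤ w_e`, `α ≥ 1`, and `C` a vertex cover
with `|C| ≤ α * τ(G)`. Then `(C, ∅)` is a mixed dominating set with
`w_v * |C| ≤ α * w(S_wmd)` for a minimum-weight mixed dominating set `S_wmd`. -/
theorem approx_vertexCover_gives_alpha_approx {V : Type*} (G : SimpleGraph V)
    (hiso : ∀ v : V, ∃ u : V, G.Adj v u)
    (wv we : ℝ) (hwv : 0 ≤ wv) (hwe : 2 * wv ≤ we)
    (α : ℝ) (hα : 1 ≤ α)
    (τ : ℕ) (hτ : ∃ C₀ : Finset V, IsVertexCover G C₀ ∧ C₀.card = τ)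
    (hτmin : ∀ C₀ : Finset V, IsVertexCover G C₀ → τ ≤ C₀.card)
    (C : Finset V) (hC : IsVertexCover G C) (hCapx : (C.card : ℝ) ≤ α * τ)
    (SVD : Finset V) (SED : Finset (Sym2 V)) (hS : IsMixedDomSet G SVD SED)
    (hSmin : ∀ (VD : Finset V) (ED : Finset (Sym2 V)), IsMixedDomSet G VD ED →
      wv * SVD.card + we * SED.card ≤ wv * VD.card + we * ED.card) :
    IsMixedDomSet G C ∅ ∧
    wv * (C.card : ℝ) ≤ α * (wv * SVD.card + we * SED.card) := by
  classical
  obtain ⟨hS1, hS2, hS3⟩ := hS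
  constructor
  · refine ⟨by simp, ?_, ?_⟩
    · intro v hv
      right
      obtain ⟨u, hu⟩ := hiso v
      rcases hC hu with h | h
      · exact absurd h hv
      · exact ⟨u, h, hu⟩
    · intro e he _
      induction e with
      | _ u w =>
        rw [SimpleGraph.mem_edgeSet] at he
        rcases hC he with h | h
        · exact ⟨u, Sym2.mem_mk_left u w, Or.inl h⟩
        · exact ⟨w, Sym2.mem_mk_right u w, Or.inl h⟩
  · -- build vertex cover from S
    set F : Finset V := SVD ∪ SED.biUnion (fun e => {e.out.1, e.out.2}) with hF
    have hmemF : ∀ v : V, ∀ e ∈ SED, v ∈ e → v ∈ F := by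
      intro v e he hv
      refine Finset.mem_union_right _ (Finset.mem_biUnion.2 ⟨e, he, ?_⟩)
      rw [← e.out_eq, Sym2.mem_iff] at hv
      simp [hv]
    have hFcover : IsVertexCover G F := by
      intro u w huw
      by_cases hmem : s(u, w) ∈ SED
      · exact Or.inl (hmemF u _ hmem (Sym2.mem_mk_left u w))
      · obtain ⟨v, hv, hvd⟩ := hS3 s(u, w) huw hmem
        rcases hvd with hvd | ⟨f, hf, hvf⟩
        · rcases Sym2.mem_iff.1 hv with rfl | rfl
          · exact Or.inl (Finset.mem_union_left _ hvd)
          · exact Or.inr (Finset.mem_union_left _ hvd)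
        · rcases Sym2.mem_iff.1 hv with rfl | rfl
          · exact Or.inl (hmemF v f hf hvf)
          · exact Or.inr (hmemF v f hf hvf)
    have hFcard : F.card ≤ SVD.card + 2 * SED.card := by
      calc F.card ≤ SVD.card + (SED.biUnion (fun e => {e.out.1, e.out.2})).card :=
            Finset.card_union_le _ _
        _ ≤ SVD.card + ∑ e ∈ SED, ({e.out.1, e.out.2} : Finset V).card :=
            Nat.add_le_add_left (Finset.card_biUnion_le) _
        _ ≤ SVD.card + ∑ e ∈ SED, 2 := by
            gcongr with e he
            exact Finset.card_insert_le _ _ |>.trans (by simp)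
        _ = SVD.card + 2 * SED.card := by
            rw [Finset.sum_const, smul_eq_mul, mul_comm]
    have hτle : (τ : ℝ) ≤ SVD.card + 2 * SED.card := by
      have := (hτmin F hFcover).trans hFcard
      exact_mod_cast this
    have h0 : (0:ℝ) ≤ (SED.card : ℝ) := by positivity
    nlinarith [mul_le_mul_of_nonneg_left hτle hwv, mul_le_mul_of_nonneg_left hCapx hwv,
      mul_le_mul_of_nonneg_left hwe h0, mul_le_mul_of_nonneg_right hα h0, hwv]
end

section
/- Let x be an optimal half-integral fractional vertex cover of a graph G, let V_{1/2} = {v : x(v) = 1/2}, let G_{1/2} be the subgraph of G induced by V_{1/2}, and let m be the maximum size of a matching in G_{1/2}. Then every vertex cover of G_{1/2} has size at least |V_{1/2}| − m. -/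
/-!
The vertices of `V½` outside a vertex cover `C` of `G[V½]` form an independent set `I`. By
optimality of `x`, every independent `S ⊆ V½` has at least `|S|` neighbours in `V½`: neighbours
of `S` outside `V½` already have value `1`, so setting `x` to `0` on `S` and to `1` on its
neighbourhood in `V½` is again a fractional cover, of total weight changed by
`(|N(S) ∩ V½| - |S|) / 2`. Hall's theorem then matches `I` into `V½`, and these edges form a
matching of `G[V½]` of size `|I| ≥ |V½| - |C|`.
-/

/-- A fractional vertex cover of `G`: `0 ≤ x v ≤ 1` and `x u + x v ≥ 1` for every edge. -/
def IsFracVertexCover {V : Type*} (G : SimpleGraph V) (x : V → ℝ) : Prop :=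
  (∀ v : V, 0 ≤ x v ∧ x v ≤ 1) ∧ ∀ ⦃u w : V⦄, G.Adj u w → 1 ≤ x u + x w

/-- A matching of the subgraph of `G` induced by `S`: a set of pairwise disjoint edges of `G`
with all endpoints in `S`. -/
def IsMatchingOn {V : Type*} (G : SimpleGraph V) (S : Finset V) (M : Finset (Sym2 V)) :
    Prop :=
  (∀ e ∈ M, e ∈ G.edgeSet) ∧ (∀ e ∈ M, ∀ v ∈ e, v ∈ S) ∧
  (∀ e ∈ M, ∀ f ∈ M, e ≠ f → ∀ v : V, v ∈ e → v ∉ f)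

/-- A vertex cover of the subgraph of `G` induced by `S`: a subset of `S` containing an
endpoint of every edge of `G` with both endpoints in `S`. -/
def IsVertexCoverOn {V : Type*} (G : SimpleGraph V) (S : Finset V) (C : Finset V) : Prop :=
  (∀ v ∈ C, v ∈ S) ∧ ∀ ⦃u w : V⦄, G.Adj u w → u ∈ S → w ∈ S → u ∈ C ∨ w ∈ C

open Finset

section

variable {V : Type*} {G : SimpleGraph V}

lemma IsFracVertexCover.eq_one_of_adj_of_ne_half {x : V → ℝ} (hx : IsFracVertexCover G x)
    {u w : V} (huw : G.Adj u w) (hu : x u = 1/2) (hw : x w = 0 ∨ x w = 1/2 ∨ x w = 1)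
    (hw' : x w ≠ 1/2) : x w = 1 := by
  rcases hw with h | h | h
  · linarith [hx.2 huw]
  · exact absurd h hw'
  · exact h

lemma IsVertexCoverOn.isIndepSet_sdiff [DecidableEq V] {T C : Finset V}
    (hC : IsVertexCoverOn G T C) : G.IsIndepSet ↑(T \ C) := by
  intro u hu w hw _ huw
  simp only [coe_sdiff, Set.mem_sdiff, mem_coe] at hu hw
  rcases hC.2 huw hu.1 hw.1 with h | h
  exacts [hu.2 h, hw.2 h]

section LowerRaise

variable [DecidableEq V]

def lowerRaise (x : V → ℝ) (S N : Finset V) (v : V) : ℝ :=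
  if v ∈ S then 0 else if v ∈ N then 1 else x v

variable {x : V → ℝ} {S N : Finset V}

lemma isFracVertexCover_lowerRaise (hx : IsFracVertexCover G x) (hS : G.IsIndepSet ↑S)
    (hN : ∀ u ∈ S, ∀ w, G.Adj u w → w ∈ N ∨ x w = 1) :
    IsFracVertexCover G (lowerRaise x S N) := by
  have hle : ∀ v ∉ S, x v ≤ lowerRaise x S N v := fun v hv => by
    unfold lowerRaise
    split_ifs
    exacts [(hx.1 v).2, le_rfl]
  have hnbr : ∀ u ∈ S, ∀ w, G.Adj u w → 1 ≤ lowerRaise x S N u + lowerRaise x S N w := by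
    intro u hu w huw
    have hwS : w ∉ S := fun hw => hS hu hw huw.ne huw
    rcases hN u hu w huw with hwN | hw1 <;> simp [lowerRaise, *]
  refine ⟨fun v => ?_, fun u w huw => ?_⟩
  · unfold lowerRaise
    split_ifs
    exacts [⟨le_rfl, zero_le_one⟩, ⟨zero_le_one, le_rfl⟩, hx.1 v]
  by_cases hu : u ∈ S
  · exact hnbr u hu w huw
  by_cases hw : w ∈ S
  · exact add_comm (lowerRaise x S N w) _ ▸ hnbr w hw u huw.symm
  linarith [hle u hu, hle w hw, hx.2 huw]

lemma sum_lowerRaise [Fintype V] (hSN : Disjoint S N) (hS : ∀ v ∈ S, x v = 1/2)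
    (hN : ∀ v ∈ N, x v = 1/2) :
    ∑ v, lowerRaise x S N v = ∑ v, x v + ((#N : ℝ) - #S) / 2 := by
  have hpt : ∀ v, lowerRaise x S N v =
      x v + ((if v ∈ N then 1/2 else 0) - (if v ∈ S then 1/2 else 0)) := fun v => by
    unfold lowerRaise
    by_cases hvS : v ∈ S
    · simp [hvS, disjoint_left.1 hSN hvS, hS v hvS]
    by_cases hvN : v ∈ N <;> simp [hvS, hvN, hN v]
    norm_num
  simp only [hpt, sum_add_distrib, sum_sub_distrib, sum_ite_mem, univ_inter, sum_const]
  ring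

end LowerRaise

section Optimal

variable [Fintype V] [DecidableEq V] [DecidableRel G.Adj] {x : V → ℝ}
  (hx : IsFracVertexCover G x) (hopt : ∀ y : V → ℝ, IsFracVertexCover G y → ∑ v, x v ≤ ∑ v, y v)
  (hhalf : ∀ v : V, x v = 0 ∨ x v = 1/2 ∨ x v = 1)
  {Vh : Finset V} (hVh : ∀ v : V, v ∈ Vh ↔ x v = 1/2)
include hx hopt hhalf hVh

/-- Otherwise lowering `S` to `0` and raising its neighbourhood in `V½` to `1` would give a
smaller fractional vertex cover. -/
lemma card_le_card_biUnion_of_isIndepSet {S : Finset V} (hSVh : S ⊆ Vh)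
    (hS : G.IsIndepSet ↑S) : #S ≤ #(S.biUnion fun u => Vh.filter (G.Adj u)) := by
  set N := S.biUnion fun u => Vh.filter (G.Adj u)
  have hmemN : ∀ {w}, w ∈ N ↔ ∃ u ∈ S, x w = 1/2 ∧ G.Adj u w := by
    simp [N, hVh]
  have hhalfS : ∀ v ∈ S, x v = 1/2 := fun v hv => (hVh v).1 (hSVh hv)
  have hSN : Disjoint S N := disjoint_left.2 fun v hvS hvN => by
    obtain ⟨u, hu, -, huv⟩ := hmemN.1 hvN
    exact hS hu hvS huv.ne huv
  have hcover : IsFracVertexCover G (lowerRaise x S N) :=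
    isFracVertexCover_lowerRaise hx hS fun u hu w huw => by
      by_cases hw : x w = 1/2
      · exact .inl (hmemN.2 ⟨u, hu, hw, huw⟩)
      · exact .inr (hx.eq_one_of_adj_of_ne_half huw (hhalfS u hu) (hhalf w) hw)
  have hle := hopt _ hcover
  have hhalfN : ∀ v ∈ N, x v = 1/2 := fun v hv => by
    obtain ⟨-, -, hv, -⟩ := hmemN.1 hv
    exact hv
  rw [sum_lowerRaise hSN hhalfS hhalfN] at hle
  by_contra! hlt
  have : (#N : ℝ) < #S := by exact_mod_cast hlt
  linarith

lemma exists_injective_adj_of_isIndepSet {I : Finset V} (hIVh : I ⊆ Vh) (hI : G.IsIndepSet ↑I) :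
    ∃ f : I → V, Function.Injective f ∧ (∀ i, f i ∈ Vh) ∧ ∀ i : I, G.Adj i (f i) := by
  obtain ⟨f, hf, hft⟩ := (all_card_le_biUnion_card_iff_exists_injective
    fun i : I => Vh.filter (G.Adj i)).1 fun s => by
      have hsI : s.image Subtype.val ⊆ I := image_subset_iff.2 fun i _ => i.2
      have := card_le_card_biUnion_of_isIndepSet hx hopt hhalf hVh (hsI.trans hIVh)
        (hI.mono (coe_subset.2 hsI))
      rwa [card_image_of_injective _ Subtype.val_injective, image_biUnion] at this
  exact ⟨f, hf, fun i => (mem_filter.1 (hft i)).1, fun i => (mem_filter.1 (hft i)).2⟩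

end Optimal

lemma exists_isMatchingOn_card_eq [DecidableEq V] {T I : Finset V} (hIT : I ⊆ T) (f : I → V)
    (hf : Function.Injective f) (hfT : ∀ i, f i ∈ T) (hadj : ∀ i : I, G.Adj i (f i))
    (hfI : ∀ i, f i ∉ I) : ∃ M, IsMatchingOn G T M ∧ #M = #I := by
  have hfne : ∀ i j : I, f i ≠ j := fun i j h => hfI i (h ▸ j.2)
  refine ⟨I.attach.image fun i => s(i.1, f i), ⟨?_, ?_, ?_⟩, ?_⟩
  · simp only [mem_image]
    rintro _ ⟨i, -, rfl⟩
    exact hadj i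
  · simp only [mem_image]
    rintro _ ⟨i, -, rfl⟩ v hv
    rcases Sym2.mem_iff.1 hv with rfl | rfl
    exacts [hIT i.2, hfT i]
  · simp only [mem_image]
    rintro _ ⟨i, -, rfl⟩ _ ⟨j, -, rfl⟩ hne v hvi hvj
    have hij : i ≠ j := fun h => hne (h ▸ rfl)
    rw [Sym2.mem_iff] at hvi hvj
    rcases hvi with rfl | rfl <;> rcases hvj with h | h
    exacts [hij (Subtype.ext h), hfne j i h.symm, hfne i j h, hij (hf h)]
  · rw [card_image_of_injective _ fun i j h => ?_, card_attach]
    rcases Sym2.eq_iff.1 h with ⟨h, -⟩ | ⟨h, -⟩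
    exacts [Subtype.ext h, absurd h.symm (hfne j i)]

end

theorem vertexCover_of_halfGraph_lower_bound_general {V : Type*} [Fintype V] (G : SimpleGraph V)
    (x : V → ℝ) (hx : IsFracVertexCover G x)
    (hopt : ∀ y : V → ℝ, IsFracVertexCover G y → ∑ v, x v ≤ ∑ v, y v)
    (hhalf : ∀ v : V, x v = 0 ∨ x v = 1/2 ∨ x v = 1)
    (Vh : Finset V) (hVh : ∀ v : V, v ∈ Vh ↔ x v = 1/2)
    (M : Finset (Sym2 V))
    (hMmax : ∀ M' : Finset (Sym2 V), IsMatchingOn G Vh M' → M'.card ≤ M.card)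
    (C : Finset V) (hC : IsVertexCoverOn G Vh C) :
    Vh.card ≤ C.card + M.card := by
  classical
  have hI := hC.isIndepSet_sdiff
  obtain ⟨f, hf, hfVh, hfadj⟩ :=
    exists_injective_adj_of_isIndepSet hx hopt hhalf hVh sdiff_subset hI
  obtain ⟨M', hM', hcard⟩ := exists_isMatchingOn_card_eq sdiff_subset f hf hfVh hfadj
    fun i hi => hI i.2 hi (hfadj i).ne (hfadj i)
  calc #Vh ≤ #(C ∪ Vh \ C) := card_le_card (by simp)
    _ ≤ #C + #(Vh \ C) := card_union_le _ _
    _ ≤ #C + #M := by have := hMmax M' hM'; omega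

/-- Let `x` be an optimal half-integral fractional vertex cover of `G`, `V½ = {v | x v = 1/2}`,
and `m = |M|` the maximum size of a matching in `G[V½]`. Then every vertex cover `C` of
`G[V½]` has size at least `|V½| − m`, i.e. `|V½| ≤ |C| + m`. -/
theorem vertexCover_of_halfGraph_lower_bound {V : Type*} [Fintype V] (G : SimpleGraph V)
    (x : V → ℝ) (hx : IsFracVertexCover G x)
    (hopt : ∀ y : V → ℝ, IsFracVertexCover G y → ∑ v, x v ≤ ∑ v, y v)
    (hhalf : ∀ v : V, x v = 0 ∨ x v = 1/2 ∨ x v = 1)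
    (Vh : Finset V) (hVh : ∀ v : V, v ∈ Vh ↔ x v = 1/2)
    (M : Finset (Sym2 V)) (hM : IsMatchingOn G Vh M)
    (hMmax : ∀ M' : Finset (Sym2 V), IsMatchingOn G Vh M' → M'.card ≤ M.card)
    (C : Finset V) (hC : IsVertexCoverOn G Vh C) :
    Vh.card ≤ C.card + M.card :=
  vertexCover_of_halfGraph_lower_bound_general G x hx hopt hhalf Vh hVh M hMmax C hC
end

section
/- Let x be an optimal half-integral fractional vertex cover of a graph G, let V_1 = {v : x(v) = 1} and V_{1/2} = {v : x(v) = 1/2}, and let m be the maximum size of a matching in the subgraph of G induced by V_{1/2}. Then every vertex cover of G has size at least |V_1| + |V_{1/2}| − m; that is, τ(G) ≥ |V_1| + |V_{1/2}| − m. -/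
/-- LP swap lemma: if decreasing `x` by `1/2` on `D` and increasing it by `1/2` on `U`
gives a feasible fractional vertex cover, then by optimality `|D| ≤ |U|`. -/
private lemma sum_swap_le {V : Type*} [Fintype V] {G : SimpleGraph V} {x : V → ℝ}
    (hopt : ∀ y : V → ℝ, IsFracVertexCover G y → ∑ v, x v ≤ ∑ v, y v)
    (D U : Finset V) (hdisj : Disjoint U D) (y : V → ℝ)
    (hyU : ∀ v ∈ U, y v = x v + 1/2) (hyD : ∀ v ∈ D, y v = x v - 1/2)
    (hyE : ∀ v, v ∉ U → v ∉ D → y v = x v)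
    (hfeas : IsFracVertexCover G y) :
    D.card ≤ U.card := by
  classical
  have h := hopt _ hfeas
  have hz : ∀ v ∈ (Finset.univ : Finset V), v ∉ U ∪ D → y v - x v = 0 := by
    intro v _ hv
    rw [Finset.mem_union] at hv
    push_neg at hv
    rw [hyE v hv.1 hv.2]; ring
  have h1 : ∑ v ∈ U, (y v - x v) = (U.card : ℝ) * (1/2) := by
    rw [Finset.sum_congr rfl (fun v hv => show y v - x v = 1/2 by rw [hyU v hv]; ring)]
    simp [mul_comm]
  have h2 : ∑ v ∈ D, (y v - x v) = -((D.card : ℝ) * (1/2)) := by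
    rw [Finset.sum_congr rfl (fun v hv => show y v - x v = -(1/2) by rw [hyD v hv]; ring)]
    simp [mul_comm]
  have h5 : ∑ v, y v - ∑ v, x v = (U.card : ℝ) * (1/2) - (D.card : ℝ) * (1/2) := by
    rw [← Finset.sum_sub_distrib, ← Finset.sum_subset (Finset.subset_univ (U ∪ D)) hz,
      Finset.sum_union hdisj, h1, h2]
    ring
  have : (D.card : ℝ) ≤ (U.card : ℝ) := by linarith
  exact_mod_cast this

/-- Let `x` be an optimal half-integral fractional vertex cover of `G`, with
`V₁ = {v | x v = 1}` and `V½ = {v | x v = 1/2}`, and let `m = |M|` be the maximum size of a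
matching in `G[V½]`. Then every vertex cover of `G` has size at least `|V₁| + |V½| − m`;
that is, `|V₁| + |V½| ≤ τ(G) + m`. -/
theorem tau_lower_bound_from_halfIntegral {V : Type*} [Fintype V] (G : SimpleGraph V)
    (x : V → ℝ) (hx : IsFracVertexCover G x)
    (hopt : ∀ y : V → ℝ, IsFracVertexCover G y → ∑ v, x v ≤ ∑ v, y v)
    (hhalf : ∀ v : V, x v = 0 ∨ x v = 1/2 ∨ x v = 1)
    (V1 : Finset V) (hV1 : ∀ v : V, v ∈ V1 ↔ x v = 1)
    (Vh : Finset V) (hVh : ∀ v : V, v ∈ Vh ↔ x v = 1/2)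
    (M : Finset (Sym2 V)) (hM : IsMatchingOn G Vh M)
    (hMmax : ∀ M' : Finset (Sym2 V), IsMatchingOn G Vh M' → M'.card ≤ M.card)
    (τ : ℕ) (hτ : ∃ C : Finset V, IsVertexCover G C ∧ C.card = τ)
    (hτmin : ∀ C : Finset V, IsVertexCover G C → τ ≤ C.card) :
    V1.card + Vh.card ≤ τ + M.card := by
  classical
  obtain ⟨C, hC, hCcard⟩ := hτ
  set A : Finset V := V1 \ C with hA_def
  set B : Finset V := Vh \ C with hB_def
  set U0 : Finset V := C.filter (fun v => x v = 0) with hU0_def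
  -- Step 1: |A| ≤ |U0| by the LP swap applied to D = A, U = U0.
  have hAcard : A.card ≤ U0.card := by
    set y : V → ℝ := fun v => if v ∈ U0 then x v + 1/2 else if v ∈ A then x v - 1/2 else x v
      with hy_def
    have hdisj : Disjoint U0 A := by
      rw [Finset.disjoint_left]
      intro v hvU hvA
      have h0 : x v = 0 := (Finset.mem_filter.1 hvU).2
      have h1 : x v = 1 := (hV1 v).1 (Finset.mem_sdiff.1 hvA).1
      rw [h0] at h1; norm_num at h1
    have hyU : ∀ v ∈ U0, y v = x v + 1/2 := by intro v hv; simp [hy_def, hv]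
    have hyA : ∀ v ∈ A, y v = x v - 1/2 := by
      intro v hv
      have hnu : v ∉ U0 := fun h => Finset.disjoint_left.1 hdisj h hv
      simp [hy_def, hnu, hv]
    have hyE : ∀ v, v ∉ U0 → v ∉ A → y v = x v := by intro v h1 h2; simp [hy_def, h1, h2]
    apply sum_swap_le hopt A U0 hdisj y hyU hyA hyE
    have hylb : ∀ v, v ∉ A → x v ≤ y v := by
      intro v hv
      by_cases hvU : v ∈ U0
      · rw [hyU v hvU]; linarith
      · rw [hyE v hvU hv]
    constructor
    · intro v
      by_cases hvU : v ∈ U0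
      · have h0 : x v = 0 := (Finset.mem_filter.1 hvU).2
        rw [hyU v hvU, h0]; norm_num
      · by_cases hvA : v ∈ A
        · have h1 : x v = 1 := (hV1 v).1 (Finset.mem_sdiff.1 hvA).1
          rw [hyA v hvA, h1]; norm_num
        · rw [hyE v hvU hvA]; exact hx.1 v
    · intro u w huw
      have hhalfy : ∀ v, v ∈ C → v ∉ A → 1/2 ≤ y v := by
        intro v hvC hvA
        rcases hhalf v with h0 | h5 | h1
        · have hvU : v ∈ U0 := Finset.mem_filter.2 ⟨hvC, h0⟩
          rw [hyU v hvU, h0]; norm_num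
        · have := hylb v hvA; linarith
        · have := hylb v hvA; linarith
      by_cases huA : u ∈ A <;> by_cases hwA : w ∈ A
      · rcases hC huw with h | h
        · exact absurd h (Finset.mem_sdiff.1 huA).2
        · exact absurd h (Finset.mem_sdiff.1 hwA).2
      · have hwC : w ∈ C := (hC huw).resolve_left (Finset.mem_sdiff.1 huA).2
        have h1 : x u = 1 := (hV1 u).1 (Finset.mem_sdiff.1 huA).1
        have h2 := hhalfy w hwC hwA
        rw [hyA u huA, h1]; linarith
      · have huC : u ∈ C := (hC huw).resolve_right (Finset.mem_sdiff.1 hwA).2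
        have h1 : x w = 1 := (hV1 w).1 (Finset.mem_sdiff.1 hwA).1
        have h2 := hhalfy u huC huA
        rw [hyA w hwA, h1]; linarith
      · have h1 := hylb u huA
        have h2 := hylb w hwA
        have h3 := hx.2 huw
        linarith
  -- B is independent in G.
  have hBindep : ∀ u ∈ B, ∀ w ∈ B, ¬ G.Adj u w := by
    intro u hu w hw hadj
    rcases hC hadj with h | h
    · exact (Finset.mem_sdiff.1 hu).2 h
    · exact (Finset.mem_sdiff.1 hw).2 h
  -- Step 2: Hall condition for B versus Vh \ B.
  have hHall : ∀ I : Finset V, I ⊆ B →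
      I.card ≤ ((Vh \ B).filter (fun w => ∃ i ∈ I, G.Adj i w)).card := by
    intro I hI
    set NI : Finset V := (Vh \ B).filter (fun w => ∃ i ∈ I, G.Adj i w) with hNI_def
    have hNIh : ∀ v ∈ NI, x v = 1/2 := fun v hv =>
      (hVh v).1 (Finset.mem_sdiff.1 (Finset.mem_filter.1 hv).1).1
    have hNInB : ∀ v ∈ NI, v ∉ B := fun v hv =>
      (Finset.mem_sdiff.1 (Finset.mem_filter.1 hv).1).2
    have hIh : ∀ v ∈ I, x v = 1/2 := fun v hv =>
      (hVh v).1 (Finset.mem_sdiff.1 (hI hv)).1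
    have hdisj : Disjoint NI I := by
      rw [Finset.disjoint_left]
      intro v hvN hvI
      exact hNInB v hvN (hI hvI)
    set y : V → ℝ := fun v => if v ∈ NI then x v + 1/2 else if v ∈ I then x v - 1/2 else x v
      with hy_def
    have hyU : ∀ v ∈ NI, y v = x v + 1/2 := by intro v hv; simp [hy_def, hv]
    have hyD : ∀ v ∈ I, y v = x v - 1/2 := by
      intro v hv
      have hnu : v ∉ NI := fun h => Finset.disjoint_left.1 hdisj h hv
      simp [hy_def, hnu, hv]
    have hyE : ∀ v, v ∉ NI → v ∉ I → y v = x v := by intro v h1 h2; simp [hy_def, h1, h2]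
    apply sum_swap_le hopt I NI hdisj y hyU hyD hyE
    have hylb : ∀ v, v ∉ I → x v ≤ y v := by
      intro v hv
      by_cases hvU : v ∈ NI
      · rw [hyU v hvU]; linarith
      · rw [hyE v hvU hv]
    constructor
    · intro v
      by_cases hvU : v ∈ NI
      · rw [hyU v hvU, hNIh v hvU]; norm_num
      · by_cases hvI : v ∈ I
        · rw [hyD v hvI, hIh v hvI]; norm_num
        · rw [hyE v hvU hvI]; exact hx.1 v
    · intro u w huw
      have key : ∀ u w, G.Adj u w → u ∈ I → w ∉ I → 1 ≤ y u + y w := by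
        intro u w huw huI hwI
        have hxu : x u = 1/2 := hIh u huI
        have hyu : y u = 0 := by rw [hyD u huI, hxu]; norm_num
        rcases hhalf w with h0 | h5 | h1
        · have := hx.2 huw; rw [hxu, h0] at this; norm_num at this
        · have hwVh : w ∈ Vh := (hVh w).2 h5
          have hwB : w ∉ B := fun hwB => hBindep u (hI huI) w hwB huw
          have hwNI : w ∈ NI := Finset.mem_filter.2
            ⟨Finset.mem_sdiff.2 ⟨hwVh, hwB⟩, u, huI, huw⟩
          rw [hyu, hyU w hwNI, h5]; norm_num
        · have := hylb w hwI; rw [hyu]; linarith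
      by_cases huI : u ∈ I <;> by_cases hwI : w ∈ I
      · exact absurd huw (hBindep u (hI huI) w (hI hwI))
      · exact key u w huw huI hwI
      · have := key w u huw.symm hwI huI; linarith
      · have h1 := hylb u huI
        have h2 := hylb w hwI
        have h3 := hx.2 huw
        linarith
  -- Step 3: Hall's theorem gives a matching of G[Vh] saturating B, so |B| ≤ |M|.
  have hBcard : B.card ≤ M.card := by
    set t : {v // v ∈ B} → Finset V := fun b => (Vh \ B).filter (fun w => G.Adj b.1 w)
      with ht_def
    have hall : ∀ s : Finset {v // v ∈ B}, s.card ≤ (s.biUnion t).card := by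
      intro s
      have hsub : s.image Subtype.val ⊆ B := by
        intro v hv
        rcases Finset.mem_image.1 hv with ⟨b, _, rfl⟩
        exact b.2
      have hcard : (s.image Subtype.val).card = s.card :=
        Finset.card_image_of_injective s Subtype.val_injective
      have heq : s.biUnion t =
          (Vh \ B).filter (fun w => ∃ i ∈ s.image Subtype.val, G.Adj i w) := by
        ext w
        constructor
        · intro hw
          rcases Finset.mem_biUnion.1 hw with ⟨b, hbs, hwt⟩
          rcases Finset.mem_filter.1 hwt with ⟨hw1, hw2⟩
          exact Finset.mem_filter.2 ⟨hw1, b.1, Finset.mem_image.2 ⟨b, hbs, rfl⟩, hw2⟩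
        · intro hw
          rcases Finset.mem_filter.1 hw with ⟨hw1, i, hi, hadj⟩
          rcases Finset.mem_image.1 hi with ⟨b, hbs, rfl⟩
          exact Finset.mem_biUnion.2 ⟨b, hbs, Finset.mem_filter.2 ⟨hw1, hadj⟩⟩
      rw [heq, ← hcard]
      exact hHall _ hsub
    obtain ⟨f, hfinj, hft⟩ := (Finset.all_card_le_biUnion_card_iff_exists_injective t).1 hall
    have hadjf : ∀ b : {v // v ∈ B}, G.Adj b.1 (f b) := fun b =>
      (Finset.mem_filter.1 (hft b)).2
    have hfVh : ∀ b : {v // v ∈ B}, f b ∈ Vh :=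
      fun b => (Finset.mem_sdiff.1 (Finset.mem_filter.1 (hft b)).1).1
    have hfnB : ∀ b : {v // v ∈ B}, f b ∉ B :=
      fun b => (Finset.mem_sdiff.1 (Finset.mem_filter.1 (hft b)).1).2
    set M' : Finset (Sym2 V) := B.attach.image (fun b => s(b.1, f b)) with hM'_def
    have hginj : Function.Injective (fun b : {v // v ∈ B} => s(b.1, f b)) := by
      intro b b' hbb'
      simp only [Sym2.eq_iff] at hbb'
      rcases hbb' with ⟨h1, _⟩ | ⟨h1, h2⟩
      · exact Subtype.ext h1
      · exact absurd (h1 ▸ b.2) (hfnB b')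
    have hMM' : IsMatchingOn G Vh M' := by
      refine ⟨?_, ?_, ?_⟩
      · intro e he
        rcases Finset.mem_image.1 he with ⟨b, _, rfl⟩
        rw [SimpleGraph.mem_edgeSet]
        exact hadjf b
      · intro e he v hv
        rcases Finset.mem_image.1 he with ⟨b, _, rfl⟩
        rcases Sym2.mem_iff.1 hv with rfl | rfl
        · exact (Finset.mem_sdiff.1 b.2).1
        · exact hfVh b
      · intro e he e' he' hne v hve hve'
        rcases Finset.mem_image.1 he with ⟨b, _, rfl⟩
        rcases Finset.mem_image.1 he' with ⟨b', _, rfl⟩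
        have hbb' : b ≠ b' := fun h => hne (by rw [h])
        rcases Sym2.mem_iff.1 hve with rfl | rfl
        · rcases Sym2.mem_iff.1 hve' with h | h
          · exact hbb' (Subtype.ext h)
          · exact hfnB b' (h ▸ b.2)
        · rcases Sym2.mem_iff.1 hve' with h | h
          · exact hfnB b (h ▸ b'.2)
          · exact hbb' (hfinj h)
    have hm'card : M'.card = B.card := by
      rw [hM'_def, Finset.card_image_of_injective _ hginj, Finset.card_attach]
    have := hMmax M' hMM'
    rw [hm'card] at this
    exact this
  -- Final counting.
  have h1 : (V1 ∩ C).card + A.card = V1.card := Finset.card_inter_add_card_sdiff V1 C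
  have h2 : (Vh ∩ C).card + B.card = Vh.card := Finset.card_inter_add_card_sdiff Vh C
  have h3 : (V1 ∩ C).card + (Vh ∩ C).card + U0.card ≤ C.card := by
    have hd1 : Disjoint (Vh ∩ C) U0 := by
      rw [Finset.disjoint_left]
      intro v hv hv0
      have ha : x v = 1/2 := (hVh v).1 (Finset.mem_inter.1 hv).1
      have hb : x v = 0 := (Finset.mem_filter.1 hv0).2
      rw [hb] at ha; norm_num at ha
    have hd2 : Disjoint (V1 ∩ C) ((Vh ∩ C) ∪ U0) := by
      rw [Finset.disjoint_left]
      intro v hv hv0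
      have ha : x v = 1 := (hV1 v).1 (Finset.mem_inter.1 hv).1
      rcases Finset.mem_union.1 hv0 with h | h
      · have hb : x v = 1/2 := (hVh v).1 (Finset.mem_inter.1 h).1
        rw [hb] at ha; norm_num at ha
      · have hb : x v = 0 := (Finset.mem_filter.1 h).2
        rw [hb] at ha; norm_num at ha
    have hsub : (V1 ∩ C) ∪ ((Vh ∩ C) ∪ U0) ⊆ C := by
      intro v hv
      rcases Finset.mem_union.1 hv with h | h
      · exact (Finset.mem_inter.1 h).2
      · rcases Finset.mem_union.1 h with h' | h'
        · exact (Finset.mem_inter.1 h').2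
        · exact (Finset.mem_filter.1 h').1
    calc (V1 ∩ C).card + (Vh ∩ C).card + U0.card
        = ((V1 ∩ C) ∪ ((Vh ∩ C) ∪ U0)).card := by
          rw [Finset.card_union_of_disjoint hd2, Finset.card_union_of_disjoint hd1]
          ring
      _ ≤ C.card := Finset.card_le_card hsub
  omega
end

section
/- Let G be a graph without isolated vertices, let x be a half-integral fractional vertex cover of G with parts V_0, V_{1/2}, V_1, and let M be a maximum matching of the subgraph of G induced by V_{1/2}. Then the mixed set D' = (V_1 ∪ (V_{1/2} \ V(M)), M), where V(M) is the set of endpoints of edges of M, is a mixed dominating set of G. -/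
/-- Let `G` have no isolated vertices, let `x` be a half-integral fractional vertex cover of
`G` with parts `V₁ = {v | x v = 1}` and `V½ = {v | x v = 1/2}`, and let `M` be a maximum
matching of `G[V½]` with endpoint set `VM`. Then `D' = (V₁ ∪ (V½ \ VM), M)` is a mixed
dominating set of `G`. -/
theorem halfIntegral_construction_isMixedDomSet {V : Type*} [Fintype V] [DecidableEq V]
    (G : SimpleGraph V) (hiso : ∀ v : V, ∃ u : V, G.Adj v u)
    (x : V → ℝ) (hx : IsFracVertexCover G x)
    (hhalf : ∀ v : V, x v = 0 ∨ x v = 1/2 ∨ x v = 1)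
    (V1 : Finset V) (hV1 : ∀ v : V, v ∈ V1 ↔ x v = 1)
    (Vh : Finset V) (hVh : ∀ v : V, v ∈ Vh ↔ x v = 1/2)
    (M : Finset (Sym2 V)) (hM : IsMatchingOn G Vh M)
    (hMmax : ∀ M' : Finset (Sym2 V), IsMatchingOn G Vh M' → M'.card ≤ M.card)
    (VM : Finset V) (hVM : ∀ v : V, v ∈ VM ↔ ∃ e ∈ M, v ∈ e) :
    IsMixedDomSet G (V1 ∪ (Vh \ VM)) M := by
  obtain ⟨hx01, hxcov⟩ := hx
  refine ⟨hM.1, ?_, ?_⟩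
  · intro v hv
    simp only [Finset.mem_union, Finset.mem_sdiff, not_or, not_and, not_not] at hv
    obtain ⟨hv1, hv2⟩ := hv
    rcases hhalf v with h0 | hh | h1
    · obtain ⟨u, hu⟩ := hiso v
      right
      refine ⟨u, Finset.mem_union_left _ ((hV1 u).2 ?_), hu⟩
      have := hxcov hu
      rcases hhalf u with h | h | h <;> linarith
    · exact Or.inl ((hVM v).1 (hv2 ((hVh v).2 hh)))
    · exact absurd ((hV1 v).2 h1) hv1
  · intro e he heM
    induction e using Sym2.ind with
    | _ u v =>
      rw [SimpleGraph.mem_edgeSet] at he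
      have hsum := hxcov he
      rcases hhalf u with h | h | h
      · refine ⟨v, Sym2.mem_mk_right u v, Or.inl (Finset.mem_union_left _ ((hV1 v).2 ?_))⟩
        rcases hhalf v with h' | h' | h' <;> linarith
      · refine ⟨u, Sym2.mem_mk_left u v, ?_⟩
        by_cases huM : u ∈ VM
        · exact Or.inr ((hVM u).1 huM)
        · exact Or.inl (Finset.mem_union_right _ (Finset.mem_sdiff.2 ⟨(hVh u).2 h, huM⟩))
      · exact ⟨u, Sym2.mem_mk_left u v, Or.inl (Finset.mem_union_left _ ((hV1 u).2 h))⟩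
end

section
/- Let G be a graph without isolated vertices, let weights satisfy 0 ≤ w_v ≤ w_e ≤ 2·w_v, let x be an optimal half-integral fractional vertex cover of G with parts V_0, V_{1/2}, V_1, and let M be a maximum matching of size m of the subgraph of G induced by V_{1/2}. Then the mixed dominating set D' = (V_1 ∪ (V_{1/2} \ V(M)), M) satisfies w(D') ≤ 2·w(D) for every mixed dominating set D of G; that is, D' is a 2-approximate minimum-weight mixed dominating set. -/
/-- Let `G` have no isolated vertices, `0 ≤ w_v ≤ w_e ≤ 2 w_v`, let `x` be an optimal
half-integral fractional vertex cover with parts `V₁, V½`, and let `M` be a maximum matching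
of `G[V½]` with endpoint set `VM`. Then `D' = (V₁ ∪ (V½ \ VM), M)` is a mixed dominating set
and `w(D') ≤ 2 w(D)` for every mixed dominating set `D` of `G`. -/
theorem halfIntegral_construction_is_2_approx {V : Type*} [Fintype V] [DecidableEq V]
    (G : SimpleGraph V) (hiso : ∀ v : V, ∃ u : V, G.Adj v u)
    (wv we : ℝ) (hwv : 0 ≤ wv) (hwe1 : wv ≤ we) (hwe2 : we ≤ 2 * wv)
    (x : V → ℝ) (hx : IsFracVertexCover G x)
    (hopt : ∀ y : V → ℝ, IsFracVertexCover G y → ∑ v, x v ≤ ∑ v, y v)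
    (hhalf : ∀ v : V, x v = 0 ∨ x v = 1/2 ∨ x v = 1)
    (V1 : Finset V) (hV1 : ∀ v : V, v ∈ V1 ↔ x v = 1)
    (Vh : Finset V) (hVh : ∀ v : V, v ∈ Vh ↔ x v = 1/2)
    (M : Finset (Sym2 V)) (hM : IsMatchingOn G Vh M)
    (hMmax : ∀ M' : Finset (Sym2 V), IsMatchingOn G Vh M' → M'.card ≤ M.card)
    (VM : Finset V) (hVM : ∀ v : V, v ∈ VM ↔ ∃ e ∈ M, v ∈ e) :
    IsMixedDomSet G (V1 ∪ (Vh \ VM)) M ∧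
    ∀ (VD : Finset V) (ED : Finset (Sym2 V)), IsMixedDomSet G VD ED →
      wv * ((V1 ∪ (Vh \ VM)).card : ℝ) + we * (M.card : ℝ) ≤
        2 * (wv * VD.card + we * ED.card) := by
  classical
  obtain ⟨hxb, hxe⟩ := hx
  obtain ⟨hMedge, hMends, hMdisj⟩ := hM
  have hadj1 : ∀ {u w : V}, G.Adj u w → x u = 0 → x w = 1 := by
    intro u w huw h0
    have h1 := hxe huw
    have h2 := (hxb w).2
    linarith
  -- Part (a)
  have parta : IsMixedDomSet G (V1 ∪ (Vh \ VM)) M := by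
    refine ⟨hMedge, ?_, ?_⟩
    · intro v hv
      rcases hhalf v with h0 | hh | h1
      · obtain ⟨u, hu⟩ := hiso v
        exact Or.inr ⟨u, Finset.mem_union_left _ ((hV1 u).2 (hadj1 hu h0)), hu⟩
      · have hvVh : v ∈ Vh := (hVh v).2 hh
        have hvVM : v ∈ VM := by
          by_contra hvm
          exact hv (Finset.mem_union_right _ (Finset.mem_sdiff.2 ⟨hvVh, hvm⟩))
        exact Or.inl ((hVM v).1 hvVM)
      · exact absurd (Finset.mem_union_left _ ((hV1 v).2 h1)) hv
    · intro e he hem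
      induction e using Sym2.ind with
      | _ u w =>
        have huw : G.Adj u w := (SimpleGraph.mem_edgeSet G).1 he
        rcases hhalf u with h0 | hh | h1
        · exact ⟨w, Sym2.mem_mk_right u w,
            Or.inl (Finset.mem_union_left _ ((hV1 w).2 (hadj1 huw h0)))⟩
        · rcases hhalf w with h0' | hh' | h1'
          · exact ⟨u, Sym2.mem_mk_left u w,
              Or.inl (Finset.mem_union_left _ ((hV1 u).2 (hadj1 huw.symm h0')))⟩
          · by_cases huVM : u ∈ VM
            · exact ⟨u, Sym2.mem_mk_left u w, Or.inr ((hVM u).1 huVM)⟩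
            · by_cases hwVM : w ∈ VM
              · exact ⟨w, Sym2.mem_mk_right u w, Or.inr ((hVM w).1 hwVM)⟩
              · exfalso
                have hnotin : ∀ v' : V, v' ∈ (s(u,w) : Sym2 V) → ∀ f ∈ M, v' ∉ f := by
                  intro v' hv' f hf hvf
                  rcases Sym2.mem_iff.1 hv' with rfl | rfl
                  · exact huVM ((hVM v').2 ⟨f, hf, hvf⟩)
                  · exact hwVM ((hVM v').2 ⟨f, hf, hvf⟩)
                have hnew : IsMatchingOn G Vh (insert (s(u,w)) M) := by
                  refine ⟨?_, ?_, ?_⟩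
                  · intro e' he'
                    rcases Finset.mem_insert.1 he' with rfl | he'
                    · exact he
                    · exact hMedge e' he'
                  · intro e' he' v' hv'
                    rcases Finset.mem_insert.1 he' with rfl | he'
                    · rcases Sym2.mem_iff.1 hv' with rfl | rfl
                      · exact (hVh v').2 hh
                      · exact (hVh v').2 hh'
                    · exact hMends e' he' v' hv'
                  · intro e1 he1 e2 he2 hne v' hv1
                    rcases Finset.mem_insert.1 he1 with rfl | he1 <;>
                      rcases Finset.mem_insert.1 he2 with he2' | he2
                    · exact absurd he2'.symm hne
                    · exact hnotin v' hv1 e2 he2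
                    · subst he2'
                      intro hv2; exact hnotin v' hv2 e1 he1 hv1
                    · exact hMdisj e1 he1 e2 he2 hne v' hv1
                have hcard := hMmax _ hnew
                rw [Finset.card_insert_of_notMem hem] at hcard
                omega
          · exact ⟨w, Sym2.mem_mk_right u w, Or.inl (Finset.mem_union_left _ ((hV1 w).2 h1'))⟩
        · exact ⟨u, Sym2.mem_mk_left u w, Or.inl (Finset.mem_union_left _ ((hV1 u).2 h1))⟩
  refine ⟨parta, ?_⟩
  intro VD ED hD
  obtain ⟨hDedge, hDdom, hDcov⟩ := hD
  -- basic structure facts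
  have hVMsub : VM ⊆ Vh := by
    intro v hv
    obtain ⟨e, he, hve⟩ := (hVM v).1 hv
    exact hMends e he v hve
  have hfil2 : ∀ e : Sym2 V, (Finset.univ.filter (· ∈ e) : Finset V).card ≤ 2 := by
    intro e
    induction e using Sym2.ind with
    | _ a b =>
      have : (Finset.univ.filter (· ∈ (s(a,b) : Sym2 V)) : Finset V) = {a, b} := by
        ext v; simp [Sym2.mem_iff]
      rw [this]
      exact Finset.card_insert_le a {b} |>.trans (by simp)
  have hVMbi : VM = M.biUnion (fun e => Finset.univ.filter (· ∈ e)) := by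
    ext v
    simp only [Finset.mem_biUnion, Finset.mem_filter, Finset.mem_univ, true_and]
    exact hVM v
  have hMpairdisj : ∀ e ∈ M, ∀ f ∈ M, e ≠ f →
      Disjoint (Finset.univ.filter (· ∈ e) : Finset V) (Finset.univ.filter (· ∈ f)) := by
    intro e he f hf hne
    rw [Finset.disjoint_left]
    intro v hv1 hv2
    exact hMdisj e he f hf hne v (Finset.mem_filter.1 hv1).2 (Finset.mem_filter.1 hv2).2
  have hVMcard : VM.card = 2 * M.card := by
    rw [hVMbi, Finset.card_biUnion hMpairdisj]
    have : ∀ e ∈ M, (Finset.univ.filter (· ∈ e) : Finset V).card = 2 := by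
      intro e he
      have hee := hMedge e he
      induction e using Sym2.ind with
      | _ a b =>
        have hab : G.Adj a b := (SimpleGraph.mem_edgeSet G).1 hee
        have : (Finset.univ.filter (· ∈ (s(a,b) : Sym2 V)) : Finset V) = {a, b} := by
          ext v; simp [Sym2.mem_iff]
        rw [this, Finset.card_insert_of_notMem (by simp [hab.ne]), Finset.card_singleton]
    rw [Finset.sum_congr rfl this, Finset.sum_const, smul_eq_mul, mul_comm]
  -- Y = VD ∪ V(ED)
  set VED : Finset V := Finset.univ.filter (fun v => ∃ f ∈ ED, v ∈ f) with hVEDdef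
  set Y : Finset V := VD ∪ VED with hYdef
  have hF1 : ∀ {u w : V}, G.Adj u w → u ∈ Y ∨ w ∈ Y := by
    intro u w huw
    by_cases he : (s(u,w) : Sym2 V) ∈ ED
    · exact Or.inl (Finset.mem_union_right _
        (Finset.mem_filter.2 ⟨Finset.mem_univ _, ⟨_, he, Sym2.mem_mk_left u w⟩⟩))
    · obtain ⟨v, hve, hv⟩ := hDcov _ ((SimpleGraph.mem_edgeSet G).2 huw) he
      have hvY : v ∈ Y := by
        rcases hv with hv | hv
        · exact Finset.mem_union_left _ hv
        · exact Finset.mem_union_right _ (Finset.mem_filter.2 ⟨Finset.mem_univ _, hv⟩)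
      rcases Sym2.mem_iff.1 hve with rfl | rfl
      · exact Or.inl hvY
      · exact Or.inr hvY
  have hYcard : Y.card ≤ VD.card + 2 * ED.card := by
    have hVEDsub : VED ⊆ ED.biUnion (fun e => Finset.univ.filter (· ∈ e)) := by
      intro v hv
      obtain ⟨f, hf, hvf⟩ := (Finset.mem_filter.1 hv).2
      exact Finset.mem_biUnion.2 ⟨f, hf, Finset.mem_filter.2 ⟨Finset.mem_univ _, hvf⟩⟩
    have hVEDcard : VED.card ≤ 2 * ED.card := by
      calc VED.card ≤ (ED.biUnion (fun e => Finset.univ.filter (· ∈ e))).card :=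
            Finset.card_le_card hVEDsub
        _ ≤ ∑ e ∈ ED, (Finset.univ.filter (· ∈ e) : Finset V).card := Finset.card_biUnion_le
        _ ≤ ∑ _e ∈ ED, 2 := Finset.sum_le_sum (fun e _ => hfil2 e)
        _ = 2 * ED.card := by rw [Finset.sum_const, smul_eq_mul, mul_comm]
    calc Y.card ≤ VD.card + VED.card := Finset.card_union_le _ _
      _ ≤ VD.card + 2 * ED.card := by omega
  -- F7 : m ≤ |Y|
  have hmY : M.card ≤ Y.card := by
    have hbig : M.card ≤ (M.biUnion (fun e => (Finset.univ.filter (· ∈ e)) ∩ Y)).card := by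
      rw [Finset.card_biUnion (fun e he f hf hne => Finset.disjoint_of_subset_left
        Finset.inter_subset_left (Finset.disjoint_of_subset_right Finset.inter_subset_left
          (hMpairdisj e he f hf hne)))]
      have h1 : ∀ e ∈ M, 1 ≤ ((Finset.univ.filter (· ∈ e)) ∩ Y).card := by
        intro e he
        have hee := hMedge e he
        induction e using Sym2.ind with
        | _ a b =>
          have hab : G.Adj a b := (SimpleGraph.mem_edgeSet G).1 hee
          rcases hF1 hab with h | h
          · exact Finset.card_pos.2 ⟨a, Finset.mem_inter.2
              ⟨Finset.mem_filter.2 ⟨Finset.mem_univ _, Sym2.mem_mk_left a b⟩, h⟩⟩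
          · exact Finset.card_pos.2 ⟨b, Finset.mem_inter.2
              ⟨Finset.mem_filter.2 ⟨Finset.mem_univ _, Sym2.mem_mk_right a b⟩, h⟩⟩
      calc M.card = ∑ _e ∈ M, 1 := by simp
        _ ≤ _ := Finset.sum_le_sum h1
    refine hbig.trans (Finset.card_le_card ?_)
    intro v hv
    obtain ⟨e, _, hve⟩ := Finset.mem_biUnion.1 hv
    exact (Finset.mem_inter.1 hve).2
  -- AGG inequality for subsets of Vh \ Y
  have hAGG : ∀ S : Finset V, S ⊆ Vh \ Y →
      S.card ≤ (Vh.filter (fun u => ∃ z ∈ S, G.Adj z u)).card := by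
    intro S hS
    set NS : Finset V := Vh.filter (fun u => ∃ z ∈ S, G.Adj z u) with hNSdef
    have hSVh : ∀ v ∈ S, v ∈ Vh := fun v hv => (Finset.mem_sdiff.1 (hS hv)).1
    have hSY : ∀ v ∈ S, v ∉ Y := fun v hv => (Finset.mem_sdiff.1 (hS hv)).2
    have hnoSS : ∀ {u w : V}, G.Adj u w → u ∈ S → w ∉ S := by
      intro u w huw hu hw
      rcases hF1 huw with h | h
      · exact hSY u hu h
      · exact hSY w hw h
    have hdisj : Disjoint S NS := by
      rw [Finset.disjoint_left]
      intro v hvS hvNS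
      obtain ⟨z, hz, hadj⟩ := (Finset.mem_filter.1 hvNS).2
      exact hnoSS hadj hz hvS
    set y : V → ℝ := fun v => if v ∈ S then 0 else if v ∈ NS then 1 else x v with hydef
    have hkey : ∀ {u w : V}, G.Adj u w → u ∈ S → 1 ≤ y u + y w := by
      intro u w huw hu
      have hwS : w ∉ S := hnoSS huw hu
      have hyu : y u = 0 := by simp [hydef, hu]
      have hyw : y w = 1 := by
        by_cases hwN : w ∈ NS
        · simp [hydef, hwS, hwN]
        · rcases hhalf w with h0 | hh | h1
          · exfalso
            have h := hxe huw
            have hxu : x u = 1/2 := (hVh u).1 (hSVh u hu)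
            linarith
          · exact absurd (Finset.mem_filter.2 ⟨(hVh w).2 hh, u, hu, huw⟩) hwN
          · simp [hydef, hwS, hwN, h1]
      rw [hyu, hyw]; norm_num
    have hycov : IsFracVertexCover G y := by
      constructor
      · intro v
        by_cases h1 : v ∈ S
        · simp [hydef, h1]
        · by_cases h2 : v ∈ NS
          · simp [hydef, h1, h2]
          · simpa [hydef, h1, h2] using hxb v
      · intro u w huw
        by_cases hu : u ∈ S
        · exact hkey huw hu
        · by_cases hw : w ∈ S
          · have := hkey huw.symm hw; linarith
          · have h1 : x u ≤ y u := by
              by_cases h2 : u ∈ NS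
              · have := (hxb u).2; simp [hydef, hu, h2]; linarith
              · simp [hydef, hu, h2]
            have h2 : x w ≤ y w := by
              by_cases h3 : w ∈ NS
              · have := (hxb w).2; simp [hydef, hw, h3]; linarith
              · simp [hydef, hw, h3]
            have := hxe huw
            linarith
    have hsum := hopt y hycov
    have hq : ∑ v, (y v - x v) = -(1/2) * S.card + (1/2) * NS.card := by
      have hzero : ∀ v ∈ Finset.univ, v ∉ S ∪ NS → y v - x v = 0 := by
        intro v _ hv
        rw [Finset.mem_union] at hv
        push_neg at hv
        simp [hydef, hv.1, hv.2]
      rw [← Finset.sum_subset (Finset.subset_univ (S ∪ NS)) hzero,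
        Finset.sum_union hdisj]
      have e1 : ∑ v ∈ S, (y v - x v) = ∑ _v ∈ S, (-(1/2) : ℝ) :=
        Finset.sum_congr rfl (fun v hv => by
          have hxv : x v = 1/2 := (hVh v).1 (hSVh v hv)
          simp [hydef, hv, hxv])
      have e2 : ∑ v ∈ NS, (y v - x v) = ∑ _v ∈ NS, ((1/2) : ℝ) :=
        Finset.sum_congr rfl (fun v hv => by
          have hvS : v ∉ S := Finset.disjoint_right.1 hdisj hv
          have hxv : x v = 1/2 := (hVh v).1 (Finset.mem_filter.1 hv).1
          simp [hydef, hvS, hv, hxv]; norm_num)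
      rw [e1, e2, Finset.sum_const, Finset.sum_const, nsmul_eq_mul, nsmul_eq_mul]
      ring
    have h0 : (0:ℝ) ≤ ∑ v, (y v - x v) := by
      rw [Finset.sum_sub_distrib]
      linarith
    rw [hq] at h0
    have : (S.card : ℝ) ≤ NS.card := by linarith
    exact_mod_cast this
  -- Z := Vh \ Y, |Z| ≤ m via Hall
  set Z : Finset V := Vh \ Y with hZdef
  have hZm : Z.card ≤ M.card := by
    set t : {z // z ∈ Z} → Finset V := fun z => Vh.filter (fun u => G.Adj z.val u) with htdef
    have hhall : ∀ s : Finset {z // z ∈ Z}, s.card ≤ (s.biUnion t).card := by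
      intro s
      have him : (s.image Subtype.val).card = s.card :=
        Finset.card_image_of_injective _ Subtype.val_injective
      have hsub : s.image Subtype.val ⊆ Z := by
        intro v hv
        obtain ⟨z, _, rfl⟩ := Finset.mem_image.1 hv
        exact z.2
      have heq : s.biUnion t = Vh.filter (fun u => ∃ z ∈ s.image Subtype.val, G.Adj z u) := by
        ext u
        simp only [Finset.mem_biUnion, Finset.mem_filter, htdef, Finset.mem_image]
        constructor
        · rintro ⟨z, hz, hu, hadj⟩
          exact ⟨hu, z.val, ⟨z, hz, rfl⟩, hadj⟩
        · rintro ⟨hu, v, ⟨z, hz, rfl⟩, hadj⟩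
          exact ⟨z, hz, hu, hadj⟩
      rw [heq, ← him]
      exact hAGG _ hsub
    obtain ⟨f, hfinj, hft⟩ := (Finset.all_card_le_biUnion_card_iff_exists_injective t).1 hhall
    have hfVh : ∀ z, f z ∈ Vh := fun z => (Finset.mem_filter.1 (hft z)).1
    have hfadj : ∀ z, G.Adj z.val (f z) := fun z => (Finset.mem_filter.1 (hft z)).2
    have hfnZ : ∀ z, f z ∉ Z := by
      intro z hc
      rcases hF1 (hfadj z) with h | h
      · exact (Finset.mem_sdiff.1 z.2).2 h
      · exact (Finset.mem_sdiff.1 hc).2 h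
    set M' : Finset (Sym2 V) := Z.attach.image (fun z => s(z.val, f z)) with hM'def
    have hinj : Set.InjOn (fun z : {v // v ∈ Z} => s(z.val, f z)) Z.attach := by
      intro z1 _ z2 _ hzz
      rcases Sym2.eq_iff.1 hzz with ⟨h1, _⟩ | ⟨h1, _⟩
      · exact Subtype.ext h1
      · exact absurd (h1 ▸ z1.2) (hfnZ z2)
    have hM'card : M'.card = Z.card := by
      rw [hM'def, Finset.card_image_of_injOn hinj, Finset.card_attach]
    have hM'match : IsMatchingOn G Vh M' := by
      refine ⟨?_, ?_, ?_⟩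
      · intro e he
        obtain ⟨z, _, rfl⟩ := Finset.mem_image.1 he
        exact (SimpleGraph.mem_edgeSet G).2 (hfadj z)
      · intro e he v hv
        obtain ⟨z, _, rfl⟩ := Finset.mem_image.1 he
        rcases Sym2.mem_iff.1 hv with rfl | rfl
        · exact (Finset.mem_sdiff.1 z.2).1
        · exact hfVh z
      · intro e1 he1 e2 he2 hne v hv1 hv2
        obtain ⟨z1, _, rfl⟩ := Finset.mem_image.1 he1
        obtain ⟨z2, _, rfl⟩ := Finset.mem_image.1 he2
        rcases Sym2.mem_iff.1 hv1 with rfl | rfl <;> rcases Sym2.mem_iff.1 hv2 with h | h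
        · exact hne (by rw [Subtype.ext h])
        · exact hfnZ z2 (h ▸ z1.2)
        · exact hfnZ z1 (h ▸ z2.2)
        · exact hne (by rw [hfinj h])
    have := hMmax M' hM'match
    omega
  -- S1 := V1 \ Y, |S1| ≤ |NS1|, NS1 ⊆ Y with x = 0
  set S1 : Finset V := V1 \ Y with hS1def
  set NS1 : Finset V := Finset.univ.filter (fun u => x u = 0 ∧ ∃ t ∈ S1, G.Adj t u) with hNS1def
  have hS1x : ∀ v ∈ S1, x v = 1 := fun v hv => (hV1 v).1 (Finset.mem_sdiff.1 hv).1
  have hNS1x : ∀ v ∈ NS1, x v = 0 := fun v hv => (Finset.mem_filter.1 hv).2.1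
  have hS1card : S1.card ≤ NS1.card := by
    have hdisj : Disjoint S1 NS1 := by
      rw [Finset.disjoint_left]
      intro v hv hc
      have h1 := hNS1x v hc
      have h2 := hS1x v hv
      linarith
    set y : V → ℝ := fun v => if v ∈ S1 then 1/2 else if v ∈ NS1 then 1/2 else x v with hydef
    have hkey : ∀ {u w : V}, G.Adj u w → u ∈ S1 → 1 ≤ y u + y w := by
      intro u w huw hu
      have hyu : y u = 1/2 := by simp [hydef, hu]
      have hyw : 1/2 ≤ y w := by
        by_cases hwS : w ∈ S1
        · simp [hydef, hwS]
        · by_cases hwN : w ∈ NS1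
          · simp [hydef, hwS, hwN]
          · have hxw : x w ≠ 0 := by
              intro h0
              exact hwN (Finset.mem_filter.2 ⟨Finset.mem_univ _, h0, u, hu, huw⟩)
            have hge : 1/2 ≤ x w := by
              rcases hhalf w with h | h | h
              · exact absurd h hxw
              · linarith
              · linarith
            simpa [hydef, hwS, hwN] using hge
      rw [hyu]; linarith
    have hycov : IsFracVertexCover G y := by
      constructor
      · intro v
        by_cases h1 : v ∈ S1
        · norm_num [hydef, h1]
        · by_cases h2 : v ∈ NS1
          · norm_num [hydef, h1, h2]
          · simpa [hydef, h1, h2] using hxb v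
      · intro u w huw
        by_cases hu : u ∈ S1
        · exact hkey huw hu
        · by_cases hw : w ∈ S1
          · have := hkey huw.symm hw; linarith
          · have h1 : x u ≤ y u := by
              by_cases h2 : u ∈ NS1
              · have := hNS1x u h2; simp [hydef, hu, h2]; linarith
              · simp [hydef, hu, h2]
            have h2 : x w ≤ y w := by
              by_cases h3 : w ∈ NS1
              · have := hNS1x w h3; simp [hydef, hw, h3]; linarith
              · simp [hydef, hw, h3]
            have := hxe huw
            linarith
    have hsum := hopt y hycov
    have hq : ∑ v, (y v - x v) = -(1/2) * S1.card + (1/2) * NS1.card := by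
      have hzero : ∀ v ∈ Finset.univ, v ∉ S1 ∪ NS1 → y v - x v = 0 := by
        intro v _ hv
        rw [Finset.mem_union] at hv
        push_neg at hv
        simp [hydef, hv.1, hv.2]
      rw [← Finset.sum_subset (Finset.subset_univ (S1 ∪ NS1)) hzero,
        Finset.sum_union hdisj]
      have e1 : ∑ v ∈ S1, (y v - x v) = ∑ _v ∈ S1, (-(1/2) : ℝ) :=
        Finset.sum_congr rfl (fun v hv => by
          have hxv := hS1x v hv
          simp [hydef, hv, hxv]; norm_num)
      have e2 : ∑ v ∈ NS1, (y v - x v) = ∑ _v ∈ NS1, ((1/2) : ℝ) :=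
        Finset.sum_congr rfl (fun v hv => by
          have hvS : v ∉ S1 := Finset.disjoint_right.1 hdisj hv
          have hxv := hNS1x v hv
          simp [hydef, hvS, hv, hxv])
      rw [e1, e2, Finset.sum_const, Finset.sum_const, nsmul_eq_mul, nsmul_eq_mul]
      ring
    have h0 : (0:ℝ) ≤ ∑ v, (y v - x v) := by
      rw [Finset.sum_sub_distrib]
      linarith
    rw [hq] at h0
    have : (S1.card : ℝ) ≤ NS1.card := by linarith
    exact_mod_cast this
  have hNS1Y : NS1 ⊆ Y := by
    intro u hu
    obtain ⟨_, t, ht, hadj⟩ := (Finset.mem_filter.1 hu).2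
    rcases hF1 hadj with h | h
    · exact absurd h (Finset.mem_sdiff.1 ht).2
    · exact h
  -- counting: |V1| + |Vh| ≤ |Y| + m
  have hV1split : V1.card = (V1 ∩ Y).card + S1.card :=
    (Finset.card_inter_add_card_sdiff V1 Y).symm
  have hVhsplit : Vh.card = (Vh ∩ Y).card + Z.card :=
    (Finset.card_inter_add_card_sdiff Vh Y).symm
  have hdisjA : Disjoint (V1 ∩ Y) (Vh ∩ Y) := by
    rw [Finset.disjoint_left]
    intro v hv1 hv2
    have h1 := (hV1 v).1 (Finset.mem_inter.1 hv1).1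
    have h2 := (hVh v).1 (Finset.mem_inter.1 hv2).1
    linarith
  have hdisjB : Disjoint ((V1 ∩ Y) ∪ (Vh ∩ Y)) NS1 := by
    rw [Finset.disjoint_left]
    intro v hv1 hv2
    have h0 := hNS1x v hv2
    rcases Finset.mem_union.1 hv1 with h | h
    · have := (hV1 v).1 (Finset.mem_inter.1 h).1; linarith
    · have := (hVh v).1 (Finset.mem_inter.1 h).1; linarith
  have hYge : (V1 ∩ Y).card + (Vh ∩ Y).card + NS1.card ≤ Y.card := by
    have : ((V1 ∩ Y) ∪ (Vh ∩ Y) ∪ NS1).card = (V1 ∩ Y).card + (Vh ∩ Y).card + NS1.card := by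
      rw [Finset.card_union_of_disjoint hdisjB, Finset.card_union_of_disjoint hdisjA]
    rw [← this]
    refine Finset.card_le_card ?_
    intro v hv
    rcases Finset.mem_union.1 hv with h | h
    · rcases Finset.mem_union.1 h with h' | h'
      · exact (Finset.mem_inter.1 h').2
      · exact (Finset.mem_inter.1 h').2
    · exact hNS1Y h
  have hkeyN : V1.card + Vh.card ≤ Y.card + M.card := by omega
  -- final arithmetic
  have hdVV : Disjoint V1 (Vh \ VM) := by
    rw [Finset.disjoint_left]
    intro v hv1 hv2
    have h1 := (hV1 v).1 hv1
    have h2 := (hVh v).1 (Finset.mem_sdiff.1 hv2).1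
    linarith
  have hVMVh : VM.card ≤ Vh.card := Finset.card_le_card hVMsub
  have hcardU : ((V1 ∪ (Vh \ VM)).card : ℝ) = (V1.card : ℝ) + Vh.card - 2 * M.card := by
    rw [Finset.card_union_of_disjoint hdVV, Finset.card_sdiff_of_subset hVMsub]
    have : (2 : ℝ) * M.card = (VM.card : ℝ) := by exact_mod_cast congrArg Nat.cast hVMcard.symm
    push_cast [Nat.cast_sub hVMVh]
    rw [hVMcard]
    push_cast
    ring
  have hYR : (Y.card : ℝ) ≤ (VD.card : ℝ) + 2 * ED.card := by exact_mod_cast hYcard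
  have hAR : (V1.card : ℝ) + Vh.card ≤ (Y.card : ℝ) + M.card := by exact_mod_cast hkeyN
  have hBR : (M.card : ℝ) ≤ Y.card := by exact_mod_cast hmY
  have hKnn : (0:ℝ) ≤ (VD.card : ℝ) := Nat.cast_nonneg _
  have ht1 : (V1.card : ℝ) + Vh.card - M.card ≤ (VD.card : ℝ) + 2 * ED.card := by linarith
  have ht2 : (M.card : ℝ) ≤ (VD.card : ℝ) + 2 * ED.card := by linarith
  have hm1 : wv * ((V1.card : ℝ) + Vh.card - M.card) ≤ wv * ((VD.card : ℝ) + 2 * ED.card) :=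
    mul_le_mul_of_nonneg_left ht1 hwv
  have hm2 : (we - wv) * (M.card : ℝ) ≤ (we - wv) * ((VD.card : ℝ) + 2 * ED.card) :=
    mul_le_mul_of_nonneg_left ht2 (by linarith)
  have hm3 : we * (VD.card : ℝ) ≤ 2 * wv * VD.card :=
    mul_le_mul_of_nonneg_right hwe2 hKnn
  rw [hcardU]
  nlinarith [hm1, hm2, hm3]
end

section
/- Let G be a graph and let the weights satisfy 0 ≤ w_e ≤ 2·w_v. Then every mixed dominating set D of G satisfies w(D) ≥ (w_e/2)·τ(G), where τ(G) is the minimum size of a vertex cover of G. -/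
/-!
The vertices of a mixed dominating set `(VD, ED)` together with the endpoints of its edges form
a vertex cover of size at most `|VD| + 2 |ED|`. Hence `τ ≤ |VD| + 2 |ED|`, and multiplying by
`w_e / 2 ≤ w_v` gives the bound.
-/

open Finset

section

variable {V : Type*} [DecidableEq V]

lemma Sym2.card_toFinset_le_two_s14 (z : Sym2 V) : #z.toFinset ≤ 2 := by
  rw [Sym2.card_toFinset]
  split_ifs <;> omega

lemma Finset.card_biUnion_sym2_toFinset_le (E : Finset (Sym2 V)) :
    #(E.biUnion Sym2.toFinset) ≤ 2 * #E :=
  calc #(E.biUnion Sym2.toFinset) ≤ ∑ e ∈ E, #e.toFinset := card_biUnion_le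
    _ ≤ #E * 2 := sum_le_card_nsmul _ _ _ fun e _ => Sym2.card_toFinset_le_two_s14 e
    _ = 2 * #E := mul_comm _ _

lemma IsMixedDomSet.isVertexCover_union {G : SimpleGraph V} {VD : Finset V}
    {ED : Finset (Sym2 V)} (hD : IsMixedDomSet G VD ED) :
    IsVertexCover G (VD ∪ ED.biUnion Sym2.toFinset) := by
  have mem_of_mem_edge {v : V} {f : Sym2 V} (hf : f ∈ ED) (hv : v ∈ f) :
      v ∈ VD ∪ ED.biUnion Sym2.toFinset :=
    mem_union_right _ (mem_biUnion.mpr ⟨f, hf, Sym2.mem_toFinset.mpr hv⟩)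
  intro u w huw
  by_cases huwD : s(u, w) ∈ ED
  · exact Or.inl (mem_of_mem_edge huwD (Sym2.mem_mk_left u w))
  obtain ⟨v, hv, hvD⟩ := hD.2.2 s(u, w) huw huwD
  have hvC : v ∈ VD ∪ ED.biUnion Sym2.toFinset := by
    rcases hvD with hvD | ⟨f, hf, hvf⟩
    · exact mem_union_left _ hvD
    · exact mem_of_mem_edge hf hvf
  rcases Sym2.mem_iff.mp hv with rfl | rfl
  · exact Or.inl hvC
  · exact Or.inr hvC

lemma IsMixedDomSet.le_card_add_two_mul_card {G : SimpleGraph V} {VD : Finset V}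
    {ED : Finset (Sym2 V)} (hD : IsMixedDomSet G VD ED) {τ : ℕ}
    (hτmin : ∀ C : Finset V, IsVertexCover G C → τ ≤ C.card) :
    τ ≤ #VD + 2 * #ED :=
  calc τ ≤ #(VD ∪ ED.biUnion Sym2.toFinset) := hτmin _ hD.isVertexCover_union
    _ ≤ #VD + #(ED.biUnion Sym2.toFinset) := card_union_le _ _
    _ ≤ #VD + 2 * #ED := Nat.add_le_add_left (card_biUnion_sym2_toFinset_le ED) _
end

theorem weight_mixedDomSet_ge_half_we_tau_general {V : Type*} (G : SimpleGraph V)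
    (wv we : ℝ) (hwe : 0 ≤ we) (hwe2 : we ≤ 2 * wv)
    (VD : Finset V) (ED : Finset (Sym2 V)) (hD : IsMixedDomSet G VD ED)
    (τ : ℕ)
    (hτmin : ∀ C : Finset V, IsVertexCover G C → τ ≤ C.card) :
    we / 2 * τ ≤ wv * VD.card + we * ED.card := by
  classical
  have hτ : (τ : ℝ) ≤ VD.card + 2 * ED.card := by
    exact_mod_cast hD.le_card_add_two_mul_card hτmin
  calc we / 2 * τ ≤ we / 2 * (VD.card + 2 * ED.card) := by gcongr
    _ = we / 2 * VD.card + we * ED.card := by ring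
    _ ≤ wv * VD.card + we * ED.card := by gcongr; linarith

/-- Let `0 ≤ w_e ≤ 2 w_v`. Then every mixed dominating set `D = (VD, ED)` of `G` satisfies
`w(D) ≥ (w_e / 2) * τ(G)`. -/
theorem weight_mixedDomSet_ge_half_we_tau {V : Type*} (G : SimpleGraph V)
    (wv we : ℝ) (hwe : 0 ≤ we) (hwe2 : we ≤ 2 * wv)
    (VD : Finset V) (ED : Finset (Sym2 V)) (hD : IsMixedDomSet G VD ED)
    (τ : ℕ) (hτ : ∃ C : Finset V, IsVertexCover G C ∧ C.card = τ)
    (hτmin : ∀ C : Finset V, IsVertexCover G C → τ ≤ C.card) :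
    we / 2 * τ ≤ wv * VD.card + we * ED.card :=
  weight_mixedDomSet_ge_half_we_tau_general G wv we hwe hwe2 VD ED hD τ hτmin
end

section
/- Let G = (V, E) be a graph with n = |V| vertices, let τ = τ(G) be the minimum size of a vertex cover of G, and let weights satisfy 0 ≤ w_v ≤ w_e ≤ 2·w_v with w_e < 2·w_v or w_v = w_e = 0. Construct the graph G_τ with vertex set V ∪ {a_1,…,a_τ} ∪ {b_1,…,b_τ} ∪ {c_0, c_1,…,c_{2n}} (all new vertices distinct from V) and edge set E ∪ {a_j b_j : 1 ≤ j ≤ τ} ∪ {v a_j : v ∈ V, 1 ≤ j ≤ τ} ∪ {c_0 u : u a vertex of G_τ other than c_0}. Then the minimum weight of a mixed dominating set of G_τ equals w_v + τ·w_e. -/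
/-- The generating relation for the graph `G_t`: the vertices are the vertices of `G`,
`t` vertices `a_j`, `t` vertices `b_j`, and `2n+1` vertices `c_0, …, c_{2n}`; the edges are
the edges of `G`, the matching edges `a_j b_j`, all edges `v a_j` (`v` a vertex of `G`), and
all edges from `c_0` to every other vertex. -/
def hardRel {V : Type*} (G : SimpleGraph V) (t n : ℕ) :
    (V ⊕ Fin t ⊕ Fin t ⊕ Fin (2 * n + 1)) → (V ⊕ Fin t ⊕ Fin t ⊕ Fin (2 * n + 1)) → Prop
  | Sum.inl u, Sum.inl v => G.Adj u v
  | Sum.inl _, Sum.inr (Sum.inl _) => True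
  | Sum.inr (Sum.inl j), Sum.inr (Sum.inr (Sum.inl k)) => j = k
  | Sum.inr (Sum.inr (Sum.inr c)), u =>
      c = (0 : Fin (2 * n + 1)) ∧ u ≠ Sum.inr (Sum.inr (Sum.inr (0 : Fin (2 * n + 1))))
  | _, _ => False

/-- The graph `G_t` built from `G` (with `n = |V|`). -/
def hardGraph {V : Type*} (G : SimpleGraph V) (t n : ℕ) :
    SimpleGraph (V ⊕ Fin t ⊕ Fin t ⊕ Fin (2 * n + 1)) :=
  SimpleGraph.fromRel (hardRel G t n)

namespace MDSAux

open Finset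

set_option linter.unusedSectionVars false
set_option linter.unusedVariables false

variable {V : Type*} [DecidableEq V] {t n : ℕ}

abbrev HW (V : Type*) (t n : ℕ) := V ⊕ Fin t ⊕ Fin t ⊕ Fin (2 * n + 1)

def vA (j : Fin t) : HW V t n := Sum.inr (Sum.inl j)
def vB (j : Fin t) : HW V t n := Sum.inr (Sum.inr (Sum.inl j))
def vC (i : Fin (2 * n + 1)) : HW V t n := Sum.inr (Sum.inr (Sum.inr i))

def toV : HW V t n → Finset V
  | Sum.inl v => {v}
  | _ => ∅

def gj : HW V t n → Finset (Fin t)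
  | Sum.inr (Sum.inl j) => {j}
  | Sum.inr (Sum.inr (Sum.inl j)) => {j}
  | _ => ∅

lemma mem_toV {v : V} {w : HW V t n} : v ∈ toV w ↔ w = Sum.inl v := by
  rcases w with u | j | j | c <;> simp [toV, eq_comm]

lemma mem_gj {j : Fin t} {w : HW V t n} : j ∈ gj w ↔ w = vA j ∨ w = vB j := by
  rcases w with u | k | k | c <;> simp [gj, vA, vB, eq_comm]

lemma card_toV_add_card_gj (w : HW V t n) : (toV w).card + (gj w).card ≤ 1 := by
  rcases w with u | k | k | c <;> simp [toV, gj]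

def vends : Sym2 (HW V t n) → Finset V :=
  Sym2.lift ⟨fun p q => toV p ∪ toV q, fun p q => union_comm _ _⟩

def gends : Sym2 (HW V t n) → Finset (Fin t) :=
  Sym2.lift ⟨fun p q => gj p ∪ gj q, fun p q => union_comm _ _⟩

lemma mem_vends {v : V} {e : Sym2 (HW V t n)} : v ∈ vends e ↔ Sum.inl v ∈ e := by
  induction e using Sym2.ind with
  | _ p q => simp [vends, mem_toV, Sym2.mem_iff, eq_comm]

lemma mem_gends {j : Fin t} {e : Sym2 (HW V t n)} :
    j ∈ gends e ↔ (vA j ∈ e ∨ vB j ∈ e) := by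
  induction e using Sym2.ind with
  | _ p q =>
    simp only [gends, Sym2.lift_mk, mem_union, mem_gj, Sym2.mem_iff]
    tauto

lemma card_vends_add_card_gends (e : Sym2 (HW V t n)) :
    (vends e).card + (gends e).card ≤ 2 := by
  induction e using Sym2.ind with
  | _ p q =>
    have h1 := card_toV_add_card_gj p
    have h2 := card_toV_add_card_gj q
    have h3 := card_union_le (toV p) (toV q)
    have h4 := card_union_le (gj p) (gj q)
    simp only [vends, gends, Sym2.lift_mk]
    omega

@[simp] lemma toV_vC (i : Fin (2 * n + 1)) : toV (vC i : HW V t n) = ∅ := rfl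
@[simp] lemma gj_vC (i : Fin (2 * n + 1)) : gj (vC i : HW V t n) = ∅ := rfl

lemma card_vends_add_card_gends_c0 {e : Sym2 (HW V t n)}
    (h : vC 0 ∈ e) : (vends e).card + (gends e).card ≤ 1 := by
  induction e using Sym2.ind with
  | _ p q =>
    rw [Sym2.mem_iff] at h
    simp only [vends, gends, Sym2.lift_mk]
    rcases h with h | h <;> subst h <;>
      simp only [toV_vC, gj_vC, empty_union, union_empty]
    · exact card_toV_add_card_gj q
    · exact card_toV_add_card_gj p

variable (G : SimpleGraph V)

lemma hardRel_cases {p q : HW V t n} (h : hardRel G t n p q) :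
    (∃ u w, p = Sum.inl u ∧ q = Sum.inl w ∧ G.Adj u w) ∨
    (∃ u j, p = Sum.inl u ∧ q = vA j) ∨
    (∃ j, p = vA j ∧ q = vB j) ∨
    (p = vC 0) := by
  rcases p with u | j | j | c <;> rcases q with u' | j' | j' | c' <;>
    simp [hardRel, vA, vB, vC] at h ⊢ <;> tauto

lemma adj_c0 {x : HW V t n} (h : x ≠ vC 0) : (hardGraph G t n).Adj (vC 0) x := by
  rw [hardGraph, SimpleGraph.fromRel_adj]
  exact ⟨fun hh => h hh.symm, Or.inl ⟨rfl, h⟩⟩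

lemma adj_VA (u : V) (j : Fin t) : (hardGraph G t n).Adj (Sum.inl u) (vA j) := by
  rw [hardGraph, SimpleGraph.fromRel_adj]
  exact ⟨by simp [vA], Or.inl trivial⟩

lemma adj_AB (j : Fin t) : (hardGraph G t n).Adj (vA j) (vB j) := by
  rw [hardGraph, SimpleGraph.fromRel_adj]
  refine ⟨by simp [vA, vB], Or.inl rfl⟩

lemma adj_G {u w : V} (h : G.Adj u w) :
    (hardGraph G t n).Adj (Sum.inl u : HW V t n) (Sum.inl w) := by
  rw [hardGraph, SimpleGraph.fromRel_adj]
  exact ⟨by simp [h.ne], Or.inl h⟩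

lemma adj_to_vC {i : Fin (2 * n + 1)} (hi : i ≠ 0) {x : HW V t n}
    (h : (hardGraph G t n).Adj x (vC i)) : x = vC 0 := by
  rw [hardGraph, SimpleGraph.fromRel_adj] at h
  obtain ⟨hne, h | h⟩ := h
  · rcases hardRel_cases G h with ⟨u, w, _, hq, _⟩ | ⟨u, j, _, hq⟩ | ⟨j, _, hq⟩ | hp
    · exact absurd hq (by simp [vC])
    · exact absurd hq (by simp [vC, vA])
    · exact absurd hq (by simp [vC, vB])
    · exact hp
  · exfalso
    simp only [vC, hardRel] at h
    exact hi (by simpa using h.1)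

end MDSAux

open MDSAux Finset in
/-- Let `G` be a graph on `n` vertices with minimum vertex cover size `τ`, and let
`0 ≤ w_v ≤ w_e ≤ 2 w_v` with `w_e < 2 w_v` or `w_v = w_e = 0`. Then the minimum weight of a
mixed dominating set of `G_τ` equals `w_v + τ * w_e`. -/
theorem minWeight_hardGraph {V : Type*} [Fintype V] [DecidableEq V] (G : SimpleGraph V)
    (wv we : ℝ) (h0 : 0 ≤ wv) (h1 : wv ≤ we) (h2 : we ≤ 2 * wv)
    (h3 : we < 2 * wv ∨ (wv = 0 ∧ we = 0))
    (t : ℕ) (C : Finset V) (hC : IsVertexCover G C) (hCcard : C.card = t)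
    (hCmin : ∀ C' : Finset V, IsVertexCover G C' → t ≤ C'.card) :
    (∃ (VD : Finset (V ⊕ Fin t ⊕ Fin t ⊕ Fin (2 * Fintype.card V + 1)))
        (ED : Finset (Sym2 (V ⊕ Fin t ⊕ Fin t ⊕ Fin (2 * Fintype.card V + 1)))),
      IsMixedDomSet (hardGraph G t (Fintype.card V)) VD ED ∧
        wv * VD.card + we * ED.card = wv + t * we) ∧
    (∀ (VD : Finset (V ⊕ Fin t ⊕ Fin t ⊕ Fin (2 * Fintype.card V + 1)))
        (ED : Finset (Sym2 (V ⊕ Fin t ⊕ Fin t ⊕ Fin (2 * Fintype.card V + 1)))),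
      IsMixedDomSet (hardGraph G t (Fintype.card V)) VD ED →
        wv + t * we ≤ wv * VD.card + we * ED.card) := by
  classical
  set n := Fintype.card V with hn
  constructor
  · -- upper bound: explicit construction
    let φ : Fin t ≃ C := (Finset.equivFinOfCardEq hCcard).symm
    refine ⟨{(vC 0 : HW V t n)},
      Finset.univ.image (fun j : Fin t => s((Sum.inl (φ j : V) : HW V t n), vA j)),
      ⟨?_, ?_, ?_⟩, ?_⟩
    · intro e he
      simp only [Finset.mem_image, Finset.mem_univ, true_and] at he
      obtain ⟨j, rfl⟩ := he
      exact adj_VA G _ j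
    · intro v hv
      right
      refine ⟨vC 0, Finset.mem_singleton_self _, ?_⟩
      exact ((hardGraph G t n).adj_symm (adj_c0 G (by simpa using hv)))
    · -- edge domination
      have hDA : ∀ j : Fin t, ∃ f ∈ Finset.univ.image
          (fun j : Fin t => s((Sum.inl (φ j : V) : HW V t n), vA j)), (vA j : HW V t n) ∈ f := by
        intro j
        exact ⟨s((Sum.inl (φ j : V) : HW V t n), vA j), Finset.mem_image_of_mem _ (Finset.mem_univ j),
          Sym2.mem_mk_right _ _⟩
      have hDC : ∀ c ∈ C, ∃ f ∈ Finset.univ.image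
          (fun j : Fin t => s((Sum.inl (φ j : V) : HW V t n), vA j)), (Sum.inl c : HW V t n) ∈ f := by
        intro c hc
        refine ⟨s((Sum.inl (φ (φ.symm ⟨c, hc⟩) : V) : HW V t n), vA (φ.symm ⟨c, hc⟩)),
          Finset.mem_image_of_mem _ (Finset.mem_univ _), ?_⟩
        simp
      intro e he hne
      induction e using Sym2.ind with
      | _ p q =>
        rw [SimpleGraph.mem_edgeSet, hardGraph, SimpleGraph.fromRel_adj] at he
        obtain ⟨hpq, h | h⟩ := he
        · rcases hardRel_cases G h with ⟨u, w, rfl, rfl, huw⟩ | ⟨u, j, rfl, rfl⟩ |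
            ⟨j, rfl, rfl⟩ | rfl
          · rcases hC huw with hu | hu
            · exact ⟨Sum.inl u, Sym2.mem_mk_left _ _, Or.inr (hDC u hu)⟩
            · exact ⟨Sum.inl w, Sym2.mem_mk_right _ _, Or.inr (hDC w hu)⟩
          · exact ⟨vA j, Sym2.mem_mk_right _ _, Or.inr (hDA j)⟩
          · exact ⟨vA j, Sym2.mem_mk_left _ _, Or.inr (hDA j)⟩
          · exact ⟨vC 0, Sym2.mem_mk_left _ _, Or.inl (Finset.mem_singleton_self _)⟩
        · rcases hardRel_cases G h with ⟨u, w, rfl, rfl, huw⟩ | ⟨u, j, rfl, rfl⟩ |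
            ⟨j, rfl, rfl⟩ | rfl
          · rcases hC huw with hu | hu
            · exact ⟨Sum.inl u, Sym2.mem_mk_right _ _, Or.inr (hDC u hu)⟩
            · exact ⟨Sum.inl w, Sym2.mem_mk_left _ _, Or.inr (hDC w hu)⟩
          · exact ⟨vA j, Sym2.mem_mk_left _ _, Or.inr (hDA j)⟩
          · exact ⟨vA j, Sym2.mem_mk_right _ _, Or.inr (hDA j)⟩
          · exact ⟨vC 0, Sym2.mem_mk_right _ _, Or.inl (Finset.mem_singleton_self _)⟩
    · -- weight
      have hED : (Finset.univ.image (fun j : Fin t => s((Sum.inl (φ j : V) : HW V t n), vA j))).card = t := by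
        rw [Finset.card_image_of_injective _ ?_, Finset.card_univ, Fintype.card_fin]
        intro j j' hjj
        simp only [Sym2.eq_iff, vA] at hjj
        rcases hjj with ⟨-, hj⟩ | ⟨hj, -⟩
        · simpa using hj
        · simp at hj
      rw [hED, Finset.card_singleton]
      push_cast
      ring
  · -- lower bound
    intro VD ED hdom
    obtain ⟨hdomE, hdomV, hdomEd⟩ := hdom
    have hwe : 0 ≤ we := le_trans h0 h1
    -- the set S of G-vertices that are in VD or endpoints of ED is a vertex cover
    set S : Finset V :=
      univ.filter (fun v => (Sum.inl v : HW V t n) ∈ VD ∨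
        ∃ e ∈ ED, (Sum.inl v : HW V t n) ∈ e) with hS
    have hSvc : IsVertexCover G S := by
      intro u w huw
      have hedge : s((Sum.inl u : HW V t n), Sum.inl w) ∈ (hardGraph G t n).edgeSet :=
        (adj_G G huw)
      by_cases hin : s((Sum.inl u : HW V t n), Sum.inl w) ∈ ED
      · exact Or.inl (mem_filter.mpr ⟨mem_univ _, Or.inr ⟨_, hin, Sym2.mem_mk_left _ _⟩⟩)
      · obtain ⟨v, hv, hvd⟩ := hdomEd _ hedge hin
        rw [Sym2.mem_iff] at hv
        have hvd' : v ∈ VD ∨ ∃ e ∈ ED, v ∈ e := hvd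
        rcases hv with rfl | rfl
        · exact Or.inl (mem_filter.mpr ⟨mem_univ _, hvd'⟩)
        · exact Or.inr (mem_filter.mpr ⟨mem_univ _, hvd'⟩)
    have htS : t ≤ S.card := hCmin S hSvc
    set x0 := (univ.filter (fun v : V => (Sum.inl v : HW V t n) ∈ VD)).card with hx0
    set y0 := (univ.filter (fun j : Fin t =>
      (vA j : HW V t n) ∈ VD ∨ (vB j : HW V t n) ∈ VD)).card with hy0
    set S1 := ∑ e ∈ ED, (vends e).card with hS1
    set S2 := ∑ e ∈ ED, (gends e).card with hS2
    -- F1 : t ≤ x0 + S1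
    have hF1 : t ≤ x0 + S1 := by
      have hsub : S ⊆ (univ.filter (fun v : V => (Sum.inl v : HW V t n) ∈ VD)) ∪
          ED.biUnion (fun e => vends e) := by
        intro v hv
        rcases (mem_filter.mp hv).2 with hvVD | ⟨e, he, hmem⟩
        · exact mem_union_left _ (mem_filter.mpr ⟨mem_univ _, hvVD⟩)
        · exact mem_union_right _ (mem_biUnion.mpr ⟨e, he, mem_vends.mpr hmem⟩)
      calc t ≤ S.card := htS
        _ ≤ _ := card_le_card hsub
        _ ≤ _ := card_union_le _ _
        _ ≤ x0 + S1 := Nat.add_le_add_left card_biUnion_le x0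
    -- F2 : t ≤ y0 + S2
    have hF2 : t ≤ y0 + S2 := by
      have hall : ∀ j : Fin t, ((vA j : HW V t n) ∈ VD ∨ (vB j : HW V t n) ∈ VD) ∨
          ∃ e ∈ ED, j ∈ gends e := by
        intro j
        have hedge : s((vA j : HW V t n), vB j) ∈ (hardGraph G t n).edgeSet := adj_AB G j
        by_cases hin : s((vA j : HW V t n), vB j) ∈ ED
        · exact Or.inr ⟨_, hin, mem_gends.mpr (Or.inl (Sym2.mem_mk_left _ _))⟩
        · obtain ⟨v, hv, hvd⟩ := hdomEd _ hedge hin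
          rw [Sym2.mem_iff] at hv
          rcases hvd with hvVD | ⟨f, hf, hvf⟩
          · left
            rcases hv with rfl | rfl
            · exact Or.inl hvVD
            · exact Or.inr hvVD
          · refine Or.inr ⟨f, hf, mem_gends.mpr ?_⟩
            rcases hv with rfl | rfl
            · exact Or.inl hvf
            · exact Or.inr hvf
      have hsub : (univ : Finset (Fin t)) ⊆
          (univ.filter (fun j : Fin t =>
            (vA j : HW V t n) ∈ VD ∨ (vB j : HW V t n) ∈ VD)) ∪
          ED.biUnion (fun e => gends e) := by
        intro j _
        rcases hall j with h | ⟨e, he, hmem⟩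
        · exact mem_union_left _ (mem_filter.mpr ⟨mem_univ _, h⟩)
        · exact mem_union_right _ (mem_biUnion.mpr ⟨e, he, hmem⟩)
      calc t = (univ : Finset (Fin t)).card := by simp
        _ ≤ _ := card_le_card hsub
        _ ≤ _ := card_union_le _ _
        _ ≤ y0 + S2 := Nat.add_le_add_left card_biUnion_le y0
    -- F3 : S1 + S2 ≤ 2 * ED.card
    have hF3 : S1 + S2 ≤ 2 * ED.card := by
      rw [hS1, hS2, ← Finset.sum_add_distrib]
      calc ∑ e ∈ ED, ((vends e).card + (gends e).card) ≤ ED.card • 2 :=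
            Finset.sum_le_card_nsmul _ _ 2 (fun e _ => card_vends_add_card_gends e)
        _ = 2 * ED.card := by rw [smul_eq_mul, Nat.mul_comm]
    -- the injective images of the vertex counts inside VD
    set SV : Finset (HW V t n) :=
      (univ.filter (fun v : V => (Sum.inl v : HW V t n) ∈ VD)).image Sum.inl with hSV
    set SJ : Finset (HW V t n) :=
      (univ.filter (fun j : Fin t => (vA j : HW V t n) ∈ VD ∨ (vB j : HW V t n) ∈ VD)).image
        (fun j => if (vA j : HW V t n) ∈ VD then (vA j : HW V t n) else vB j) with hSJ
    have hSVcard : SV.card = x0 := card_image_of_injective _ Sum.inl_injective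
    have hSJcard : SJ.card = y0 := by
      apply card_image_of_injective
      intro a b hab
      dsimp only at hab
      split_ifs at hab <;>
        first
          | simpa [vA, vB] using hab
          | exact absurd hab (by simp [vA, vB])
    have hsubVD : SV ∪ SJ ⊆ VD := by
      intro a ha
      rcases mem_union.mp ha with ha | ha
      · obtain ⟨v, hv, rfl⟩ := mem_image.mp ha
        exact (mem_filter.mp hv).2
      · obtain ⟨j, hj, rfl⟩ := mem_image.mp ha
        rcases (mem_filter.mp hj).2 with h | h
        · simp only [if_pos h]; exact h
        · by_cases hja : (vA j : HW V t n) ∈ VD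
          · simp only [if_pos hja]; exact hja
          · simp only [if_neg hja]; exact h
    have hdisj : Disjoint SV SJ := by
      rw [disjoint_left]
      intro a haSV haSJ
      obtain ⟨v, _, rfl⟩ := mem_image.mp haSV
      obtain ⟨j, _, hj⟩ := mem_image.mp haSJ
      by_cases hja : (vA j : HW V t n) ∈ VD
      · rw [if_pos hja] at hj; exact absurd hj (by simp [vA])
      · rw [if_neg hja] at hj; exact absurd hj (by simp [vB])
    have hcardU : (SV ∪ SJ).card = x0 + y0 := by
      rw [card_union_of_disjoint hdisj, hSVcard, hSJcard]
    have hnotc0 : (vC 0 : HW V t n) ∉ SV ∪ SJ := by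
      rw [mem_union]
      rintro (h | h)
      · obtain ⟨v, -, hv⟩ := mem_image.mp h
        exact absurd hv (by simp [vC])
      · obtain ⟨j, -, hj⟩ := mem_image.mp h
        by_cases hja : (vA j : HW V t n) ∈ VD
        · rw [if_pos hja] at hj; exact absurd hj (by simp [vA, vC])
        · rw [if_neg hja] at hj; exact absurd hj (by simp [vB, vC])
    by_cases hc0 : (vC 0 : HW V t n) ∈ VD ∨ ∃ e ∈ ED, (vC 0 : HW V t n) ∈ e
    · -- case B : c0 is in VD or covered by an edge of ED
      rcases hc0 with hc0VD | ⟨ec, hec, hc0ec⟩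
      · -- B1 : c0 ∈ VD
        have hk : x0 + y0 + 1 ≤ VD.card := by
          have hins : insert (vC 0 : HW V t n) (SV ∪ SJ) ⊆ VD :=
            insert_subset hc0VD hsubVD
          have := card_le_card hins
          rwa [card_insert_of_notMem hnotc0, hcardU] at this
        by_cases htm : t ≤ ED.card
        · have hK1 : (1:ℝ) ≤ VD.card := by
            have : 1 ≤ VD.card := by omega
            exact_mod_cast this
          have hMt : (t:ℝ) ≤ ED.card := by exact_mod_cast htm
          nlinarith [mul_le_mul_of_nonneg_left hK1 h0, mul_le_mul_of_nonneg_left hMt hwe]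
        · push_neg at htm
          have hkk : 2 * t + 1 ≤ VD.card + 2 * ED.card := by omega
          have hKc : (2*(t:ℝ)+1) ≤ (VD.card : ℝ) + 2 * ED.card := by exact_mod_cast hkk
          have hMc : (ED.card : ℝ) ≤ t := by exact_mod_cast le_of_lt htm
          nlinarith [mul_nonneg h0
              (by linarith : (0:ℝ) ≤ (VD.card:ℝ) + 2*(ED.card:ℝ) - (2*t+1)),
            mul_nonneg (by linarith : (0:ℝ) ≤ 2*wv - we)
              (by linarith : (0:ℝ) ≤ (t:ℝ) - ED.card)]
      · -- B2 : c0 covered by the edge ec ∈ ED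
        have hk : x0 + y0 ≤ VD.card := by
          have := card_le_card hsubVD
          rwa [hcardU] at this
        have hF3' : S1 + S2 + 1 ≤ 2 * ED.card := by
          have h1e := card_vends_add_card_gends_c0 hc0ec
          have hsplit : (vends ec).card + (gends ec).card
              + ∑ e ∈ ED.erase ec, ((vends e).card + (gends e).card)
              = ∑ e ∈ ED, ((vends e).card + (gends e).card) :=
            Finset.add_sum_erase ED (fun e => (vends e).card + (gends e).card) hec
          have hrest : ∑ e ∈ ED.erase ec, ((vends e).card + (gends e).card) ≤
              (ED.card - 1) * 2 := by
            have := Finset.sum_le_card_nsmul (ED.erase ec)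
              (fun e => (vends e).card + (gends e).card) 2
              (fun e _ => card_vends_add_card_gends e)
            rwa [card_erase_of_mem hec, smul_eq_mul] at this
          have hpos : 1 ≤ ED.card := card_pos.mpr ⟨ec, hec⟩
          have hsum : S1 + S2 = ∑ e ∈ ED, ((vends e).card + (gends e).card) := by
            rw [hS1, hS2, ← Finset.sum_add_distrib]
          omega
        by_cases htm : t + 1 ≤ ED.card
        · have hMt : ((t:ℝ)+1) ≤ ED.card := by exact_mod_cast htm
          have hK0 : (0:ℝ) ≤ VD.card := Nat.cast_nonneg _
          nlinarith [mul_nonneg h0 hK0, mul_le_mul_of_nonneg_left hMt hwe]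
        · push_neg at htm
          have hkk : 2 * t + 1 ≤ VD.card + 2 * ED.card := by omega
          have hKc : (2*(t:ℝ)+1) ≤ (VD.card : ℝ) + 2 * ED.card := by exact_mod_cast hkk
          have hMc : (ED.card : ℝ) ≤ t := by
            have : ED.card ≤ t := by omega
            exact_mod_cast this
          nlinarith [mul_nonneg h0
              (by linarith : (0:ℝ) ≤ (VD.card:ℝ) + 2*(ED.card:ℝ) - (2*t+1)),
            mul_nonneg (by linarith : (0:ℝ) ≤ 2*wv - we)
              (by linarith : (0:ℝ) ≤ (t:ℝ) - ED.card)]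
    · -- case A : c0 not in VD and not covered
      push_neg at hc0
      obtain ⟨hc0VD, hc0E⟩ := hc0
      rcases hdomV (vC 0) hc0VD with ⟨e, he, hmem⟩ | ⟨u, huVD, hadj⟩
      · exact absurd hmem (hc0E e he)
      · have hune : u ≠ vC 0 := fun h => hc0VD (h ▸ huVD)
        by_cases hn0 : n = 0
        · -- impossible : the whole graph is just {c0}
          exfalso
          have hV0 : Fintype.card V = 0 := by rw [← hn]; exact hn0
          have hVempty : IsEmpty V := Fintype.card_eq_zero_iff.mp hV0
          have ht0 : t = 0 := by
            have := hCmin ∅ (by intro a b hab; exact (hVempty.false a).elim)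
            simpa using this
          apply hune
          rcases u with v | j | j | c
          · exact (hVempty.false v).elim
          · exact absurd j.isLt (by omega)
          · exact absurd j.isLt (by omega)
          · have hc : c = 0 := by
              have := c.isLt
              apply Fin.ext
              simp only [Fin.val_zero]
              omega
            rw [hc]; rfl
        · have hn1 : 1 ≤ n := Nat.one_le_iff_ne_zero.mpr hn0
          have hCin : ∀ i : Fin (2*n+1), i ≠ 0 → (vC i : HW V t n) ∈ VD := by
            intro i hi
            by_contra hnot
            rcases hdomV _ hnot with ⟨e, he, hmem⟩ | ⟨u', hu', hadj'⟩
            · have hedge := hdomE e he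
              have hsp := Sym2.other_spec hmem
              have hadj2 : (hardGraph G t n).Adj (vC i) (Sym2.Mem.other hmem) := by
                rw [← SimpleGraph.mem_edgeSet, hsp]; exact hedge
              have hother : Sym2.Mem.other hmem = vC 0 := adj_to_vC G hi hadj2.symm
              exact hc0E e he (by rw [← hsp, hother]; exact Sym2.mem_mk_right _ _)
            · have : u' = vC 0 := adj_to_vC G hi hadj'.symm
              exact hc0VD (this ▸ hu')
          have h2n : 2*n ≤ VD.card := by
            have hinj : ((univ : Finset (Fin (2*n+1))).erase 0).card ≤ VD.card := by
              apply card_le_card_of_injOn (fun i => (vC i : HW V t n))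
              · intro i hi; exact hCin i (mem_erase.mp hi).1
              · intro a _ b _ hab; simpa [vC] using hab
            rwa [card_erase_of_mem (mem_univ _), card_univ, Fintype.card_fin,
              Nat.add_sub_cancel] at hinj
          obtain ⟨v0⟩ : Nonempty V := by
            rw [← Fintype.card_pos_iff, ← hn]; omega
          have htn : t + 1 ≤ n := by
            have hcov : IsVertexCover G (univ.erase v0) := by
              intro a b hab
              by_cases ha : a = v0
              · right
                refine mem_erase.mpr ⟨?_, mem_univ _⟩
                intro hb
                exact hab.ne (by rw [ha, hb])
              · exact Or.inl (mem_erase.mpr ⟨ha, mem_univ _⟩)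
            have := hCmin _ hcov
            rw [card_erase_of_mem (mem_univ _), card_univ, ← hn] at this
            omega
          have hKc : (2*(n:ℝ)) ≤ VD.card := by exact_mod_cast h2n
          have htnc : (t:ℝ) + 1 ≤ n := by exact_mod_cast htn
          have hM0 : (0:ℝ) ≤ ED.card := Nat.cast_nonneg _
          have P1 : (0:ℝ) ≤ wv * ((VD.card:ℝ) - 2*n) := mul_nonneg h0 (by linarith)
          have P2 : (0:ℝ) ≤ (2*wv - we) * t :=
            mul_nonneg (by linarith) (Nat.cast_nonneg t)
          have P3 : (0:ℝ) ≤ we * ED.card := mul_nonneg hwe hM0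
          have P4 : (0:ℝ) ≤ wv * ((n:ℝ) - t - 1) := mul_nonneg h0 (by linarith)
          linarith [P1, P2, P3, P4]
end
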